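/- arXiv:1812.00228 — 8 statements merged into one kernel-verified Lean document; each statement's English description precedes it below -/
import Mathlib

section
/- Let Δ ⊆ M denote the (finite) set of roots, n := dim M the rank, and fix any root θ with coroot θ∨. Then n · #{α ∈ Δ : ⟨α, θ∨⟩ = 1} = 2·|Δ| − 4n and n · #{α ∈ Δ : ⟨α, θ∨⟩ = 0} = n·|Δ| − 4·|Δ| + 6n. Equivalently, writing |Δ| = n·h∨ with h∨ the (dual) Coxeter number, the number of roots α with ⟨α,θ∨⟩ = 1 is 2(h∨−2) and the number with ⟨α,θ∨⟩ = 0 is n·h∨ − 4h∨ + 6. (Proposition 7.1(b) of the paper: dim g₁ = 2(h∨−2) and dim g₀ = n(h∨+1) − 4h∨ + 6, the latter including the n-dimensional Cartan subalgebra.) -/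
/-!
All roots have the same length `q = B(θ, θ)` for the canonical form `B = ∑ᵢ αᵢ∨ ⊗ αᵢ∨`: simple
lacing makes lengths agree along every nonzero pairing, and irreducibility propagates this.
Hence `q αᵢ∨ = 2 B(αᵢ, ·)`, so by nondegeneracy of `B` the operator `x ↦ ∑ᵢ ⟨x, αᵢ∨⟩ αᵢ` is
`(q / 2) id`, and taking traces gives `q n = 4 |Δ|`. On the other hand the values
`⟨α, θ∨⟩ = ⟨θ, α∨⟩` lie in `{0, ±1, ±2}`, the value `±2` is taken only at `α = ±θ`, and `α ↦ -α`
swaps the values `1` and `-1`. Writing `Nₖ` for the number of roots with `⟨α, θ∨⟩ = k`, this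
gives `q = ∑ ⟨α, θ∨⟩² = 8 + 2 N₁` and `|Δ| = 2 + 2 N₁ + N₀`; eliminating `q` gives both formulas.
-/

open Finset

namespace RootPairing

variable {ι R M N : Type*} [Fintype ι] [AddCommGroup M] [AddCommGroup N]

section CommRing

variable [CommRing R] [Module R M] [Module R N] (P : RootPairing ι R M N)

lemma rootForm_root_self_mul_coroot' (i : ι) (x : M) :
    P.RootForm (P.root i) (P.root i) * P.coroot' i x = 2 * P.RootForm (P.root i) x := by
  have h := congrArg (P.toLinearMap x) (P.rootForm_self_smul_coroot i)
  simp only [map_smul, map_nsmul, smul_eq_mul, nsmul_eq_mul, Nat.cast_ofNat,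
    toLinearMap_apply_apply_Polarization] at h
  exact h

lemma card_filter_pairing_eq_neg [DecidableEq R] (j : ι) (v : R) :
    #{i | P.pairing i j = -v} = #{i | P.pairing i j = v} := by
  let := P.indexNeg
  refine card_bij' (fun i _ ↦ -i) (fun i _ ↦ -i) ?_ ?_ (fun i _ ↦ neg_neg i) (fun i _ ↦ neg_neg i)
  all_goals
    intro i hi
    simp_all

lemma ncard_setOf_coroot'_eq [DecidableEq R] (j : ι) (v : R) :
    {x ∈ Set.range P.root | P.coroot' j x = v}.ncard = #{i | P.pairing i j = v} := by
  have : {x ∈ Set.range P.root | P.coroot' j x = v} =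
      P.root '' (({i | P.pairing i j = v} : Finset ι) : Set ι) := by
    ext x
    simp only [Set.mem_ofPred_eq, Set.mem_range, Set.mem_image, coe_filter, mem_univ, true_and]
    constructor
    · rintro ⟨⟨i, rfl⟩, h⟩
      exact ⟨i, by rwa [root_coroot'_eq_pairing] at h, rfl⟩
    · rintro ⟨i, h, rfl⟩
      exact ⟨⟨i, rfl⟩, by rwa [root_coroot'_eq_pairing]⟩
  rw [this, Set.ncard_image_of_injective _ P.root.injective, Set.ncard_coe_finset]

lemma ncard_range_root : (Set.range P.root).ncard = Fintype.card ι := by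
  rw [← Set.image_univ, Set.ncard_image_of_injective _ P.root.injective, Set.ncard_univ,
    Nat.card_eq_fintype_card]

end CommRing

section IsDomain

variable [CommRing R] [IsDomain R] [Module R M] [Module R N] (P : RootPairing ι R M N)

lemma rootForm_root_self_eq_of_pairing_eq_pairing {i j : ι} (h : P.pairing i j = P.pairing j i)
    (h₀ : P.pairing i j ≠ 0) :
    P.RootForm (P.root i) (P.root i) = P.RootForm (P.root j) (P.root j) := by
  have hi := P.rootForm_root_self_mul_coroot' i (P.root j)
  have hj := P.rootForm_root_self_mul_coroot' j (P.root i)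
  have hsym : P.RootForm (P.root i) (P.root j) = P.RootForm (P.root j) (P.root i) :=
    P.rootForm_symmetric.eq _ _
  rw [root_coroot'_eq_pairing, hsym] at hi
  rw [root_coroot'_eq_pairing, ← hi, h] at hj
  exact (mul_right_cancel₀ (h ▸ h₀) hj).symm

lemma rootForm_root_self_eq_of_connected (hsl : ∀ k l : ι, P.pairing k l = P.pairing l k)
    (hirr : ∀ s : Set ι, (∀ k ∈ s, ∀ l ∉ s, P.pairing k l = 0) → s = ∅ ∨ s = Set.univ)
    (i j : ι) :
    P.RootForm (P.root i) (P.root i) = P.RootForm (P.root j) (P.root j) := by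
  let s : Set ι := {k | P.RootForm (P.root k) (P.root k) = P.RootForm (P.root j) (P.root j)}
  have hs : ∀ k ∈ s, ∀ l ∉ s, P.pairing k l = 0 := fun k hk l hl ↦ by
    by_contra h₀
    exact hl <| (P.rootForm_root_self_eq_of_pairing_eq_pairing (hsl k l) h₀).symm.trans hk
  rcases hirr s hs with h | h
  · exact absurd (show j ∈ s from rfl) (h ▸ Set.notMem_empty j)
  · exact show i ∈ s from h ▸ Set.mem_univ i

lemma two_smul_sum_smulRight_eq_smul_id [P.IsAnisotropic]
    (hspan : Submodule.span R (Set.range P.root) = ⊤) {q : R}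
    (hq : ∀ i, P.RootForm (P.root i) (P.root i) = q) :
    (2 : R) • ∑ i, (P.coroot' i).smulRight (P.root i) = q • LinearMap.id := by
  ext x
  set y := (2 : R) • ∑ i, P.coroot' i x • P.root i - q • x
  suffices hy : P.RootForm y = 0 by
    have hker := P.disjoint_rootSpan_ker_rootForm.eq_bot
    rw [rootSpan, hspan, top_inf_eq, LinearMap.ker_eq_bot'] at hker
    simpa [y, sub_eq_zero, LinearMap.sum_apply] using hker y hy
  ext z
  simp only [y, map_sub, map_smul, map_sum, LinearMap.sub_apply, LinearMap.smul_apply,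
    LinearMap.sum_apply, smul_eq_mul, LinearMap.zero_apply]
  rw [rootForm_apply_apply P x z, mul_sum, mul_sum, sub_eq_zero]
  refine sum_congr rfl fun i _ ↦ ?_
  rw [← hq i]
  linear_combination (-P.coroot' i x) * P.rootForm_root_self_mul_coroot' i z

end IsDomain

section Field

variable [Field R] [Module R M] [Module R N] (P : RootPairing ι R M N)

lemma rootForm_root_self_mul_finrank [P.IsAnisotropic]
    (hspan : Submodule.span R (Set.range P.root) = ⊤) {q : R}
    (hq : ∀ i, P.RootForm (P.root i) (P.root i) = q) :
    q * Module.finrank R M = 4 * Fintype.card ι := by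
  have : Module.Finite R M := ⟨hspan ▸ Submodule.fg_span (Set.finite_range P.root)⟩
  have h := congrArg (LinearMap.trace R M) (P.two_smul_sum_smulRight_eq_smul_id hspan hq)
  simp only [map_smul, map_sum, LinearMap.trace_smulRight, root_coroot'_eq_pairing, pairing_same,
    LinearMap.trace_id, sum_const, card_univ, smul_eq_mul, nsmul_eq_mul] at h
  linear_combination -h

variable [CharZero R]

lemma pairing_eq_two_iff_of_pairing_eq_pairing {i j : ι} (h : P.pairing i j = P.pairing j i) :
    P.pairing i j = 2 ↔ i = j := by
  rw [← P.pairing_two_two_iff, ← h, and_self]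

lemma pairing_eq_neg_two_iff_of_pairing_eq_pairing {i j : ι}
    (h : P.pairing i j = P.pairing j i) :
    P.pairing i j = -2 ↔ i = P.reflectionPerm j j := by
  rw [← root_eq_neg_iff, ← P.pairing_neg_two_neg_two_iff, ← h, and_self]

lemma pairing_mem_of_pairing_eq_pairing [P.IsCrystallographic] [DecidableEq R] {i j : ι}
    (h : P.pairing i j = P.pairing j i) :
    P.pairing i j ∈ ({-2, -1, 0, 1, 2} : Finset R) := by
  have hmem := P.pairingIn_pairingIn_mem_set_of_isCrystallographic i j
  simp only [← P.algebraMap_pairingIn ℤ] at h ⊢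
  rw [FaithfulSMul.algebraMap_injective ℤ R h] at hmem ⊢
  have ha : P.pairingIn ℤ j i ∈ ({-2, -1, 0, 1, 2} : Finset ℤ) := by
    generalize P.pairingIn ℤ j i = a at hmem
    simp only [Set.mem_insert_iff, Set.mem_singleton_iff, Prod.mk.injEq] at hmem
    simp only [Finset.mem_insert, Finset.mem_singleton]
    omega
  simp only [Finset.mem_insert, Finset.mem_singleton] at ha
  rcases ha with h | h | h | h | h <;> simp [h]

section

variable [DecidableEq R] {j : ι}

lemma card_filter_pairing_eq_two (hsl : ∀ i, P.pairing i j = P.pairing j i) :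
    #{i | P.pairing i j = 2} = 1 := by
  rw [card_eq_one]
  exact ⟨j, by ext i; simp [P.pairing_eq_two_iff_of_pairing_eq_pairing (hsl i)]⟩

lemma card_filter_pairing_eq_neg_two (hsl : ∀ i, P.pairing i j = P.pairing j i) :
    #{i | P.pairing i j = -2} = 1 := by
  rw [card_filter_pairing_eq_neg, P.card_filter_pairing_eq_two hsl]

variable [P.IsCrystallographic]

lemma sum_pairing_sq (hsl : ∀ i, P.pairing i j = P.pairing j i) :
    ∑ i, P.pairing i j ^ 2 = 8 + 2 * #{i | P.pairing i j = 1} := by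
  have hfib (v : R) : ∑ i with P.pairing i j = v, P.pairing i j ^ 2 =
      #{i | P.pairing i j = v} * v ^ 2 := by
    rw [sum_congr rfl fun i hi ↦ by rw [(mem_filter.1 hi).2], sum_const, nsmul_eq_mul]
  rw [← sum_fiberwise_of_maps_to (t := {-2, -1, 0, 1, 2})
    fun i _ ↦ P.pairing_mem_of_pairing_eq_pairing (hsl i)]
  rw [sum_insert (by norm_num), sum_insert (by norm_num), sum_insert (by norm_num),
    sum_insert (by norm_num), sum_singleton]
  simp only [hfib, P.card_filter_pairing_eq_neg_two hsl, P.card_filter_pairing_eq_two hsl,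
    P.card_filter_pairing_eq_neg j 1]
  ring

lemma card_eq_two_add_card_filter_pairing (hsl : ∀ i, P.pairing i j = P.pairing j i) :
    Fintype.card ι = 2 + 2 * #{i | P.pairing i j = 1} + #{i | P.pairing i j = 0} := by
  rw [← card_univ, card_eq_sum_card_fiberwise (t := {-2, -1, 0, 1, 2})
    fun i _ ↦ P.pairing_mem_of_pairing_eq_pairing (hsl i)]
  rw [sum_insert (by norm_num), sum_insert (by norm_num), sum_insert (by norm_num),
    sum_insert (by norm_num), sum_singleton, P.card_filter_pairing_eq_neg_two hsl,
    P.card_filter_pairing_eq_two hsl, P.card_filter_pairing_eq_neg j 1]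
  ring

end

end Field

end RootPairing

theorem card_roots_pairing_one_and_zero_general
    {ι M N : Type*} [Fintype ι]
    [AddCommGroup M] [Module ℝ M] [AddCommGroup N] [Module ℝ N]
    (P : RootPairing ι ℝ M N)
    (hspan : Submodule.span ℝ (Set.range P.root) = ⊤)
    (hcr : P.IsCrystallographic)
    (hsl : ∀ k l : ι, P.pairing k l = P.pairing l k)
    (hirr : ∀ s : Set ι, (∀ k ∈ s, ∀ l ∉ s, P.pairing k l = 0) →
      s = ∅ ∨ s = Set.univ)
    (i₀ : ι) :
    (Module.finrank ℝ M : ℤ) *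
        ({α ∈ Set.range P.root | P.coroot' i₀ α = 1}.ncard : ℤ) =
      2 * ((Set.range P.root).ncard : ℤ) - 4 * (Module.finrank ℝ M : ℤ) ∧
    (Module.finrank ℝ M : ℤ) *
        ({α ∈ Set.range P.root | P.coroot' i₀ α = 0}.ncard : ℤ) =
      (Module.finrank ℝ M : ℤ) * ((Set.range P.root).ncard : ℤ)
        - 4 * ((Set.range P.root).ncard : ℤ) + 6 * (Module.finrank ℝ M : ℤ) := by
  have hsl₀ (i : ι) : P.pairing i i₀ = P.pairing i₀ i := hsl i i₀
  have hlength (i : ι) := P.rootForm_root_self_eq_of_connected hsl hirr i i₀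
  have htrace := P.rootForm_root_self_mul_finrank hspan hlength
  have hlength₀ : P.RootForm (P.root i₀) (P.root i₀) = 8 + 2 * #{i | P.pairing i i₀ = 1} := by
    rw [P.rootForm_root_self, ← P.sum_pairing_sq hsl₀]
    simp only [hsl₀, sq]
  have hcard := P.card_eq_two_add_card_filter_pairing hsl₀
  rw [hlength₀, hcard] at htrace
  rw [P.ncard_setOf_coroot'_eq, P.ncard_setOf_coroot'_eq, P.ncard_range_root, hcard]
  replace htrace : ((8 + 2 * #{i | P.pairing i i₀ = 1}) * Module.finrank ℝ M : ℤ) =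
      4 * (2 + 2 * #{i | P.pairing i i₀ = 1} + #{i | P.pairing i i₀ = 0}) := by
    exact_mod_cast htrace
  push_cast
  constructor
  · linarith
  · linear_combination -htrace

/-- Proposition 7.1(b) of the paper: let `Δ` be the set of roots of a finite, irreducible,
crystallographic, reduced, simply-laced root system over `ℝ`, `n = dim M` its rank, and `θ` any
root with coroot `θ∨`.  Then `n · #{α ∈ Δ : ⟨α,θ∨⟩ = 1} = 2·|Δ| − 4n` and
`n · #{α ∈ Δ : ⟨α,θ∨⟩ = 0} = n·|Δ| − 4·|Δ| + 6n`; equivalently, writing `|Δ| = n·h∨`, there are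
`2(h∨−2)` roots pairing to `1` with `θ∨` and `n·h∨ − 4h∨ + 6` roots orthogonal to `θ∨`. -/
theorem card_roots_pairing_one_and_zero
    {ι M N : Type*} [Fintype ι]
    [AddCommGroup M] [Module ℝ M] [AddCommGroup N] [Module ℝ N]
    (P : RootPairing ι ℝ M N)
    (hspan : Submodule.span ℝ (Set.range P.root) = ⊤)
    (hcr : P.IsCrystallographic) (hred : P.IsReduced)
    (hsl : ∀ k l : ι, P.pairing k l = P.pairing l k)
    (hirr : ∀ s : Set ι, (∀ k ∈ s, ∀ l ∉ s, P.pairing k l = 0) →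
      s = ∅ ∨ s = Set.univ)
    (i₀ : ι) :
    (Module.finrank ℝ M : ℤ) *
        ({α ∈ Set.range P.root | P.coroot' i₀ α = 1}.ncard : ℤ) =
      2 * ((Set.range P.root).ncard : ℤ) - 4 * (Module.finrank ℝ M : ℤ) ∧
    (Module.finrank ℝ M : ℤ) *
        ({α ∈ Set.range P.root | P.coroot' i₀ α = 0}.ncard : ℤ) =
      (Module.finrank ℝ M : ℤ) * ((Set.range P.root).ncard : ℤ)
        - 4 * ((Set.range P.root).ncard : ℤ) + 6 * (Module.finrank ℝ M : ℤ) :=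
  card_roots_pairing_one_and_zero_general P hspan hcr hsl hirr i₀
end

section
/- Let i ∈ ℕ, let J be a finite set, let w : J → ℂ be injective with w(j) ≠ 0 for all j, and let m : J → ℕ with m(j) ≥ 1. Let F be a rational function (an element of RatFunc ℂ) such that the denominator of F divides X^i · ∏_{j∈J} (X − C(w j))^{m(j)}, and such that intDegree(F) ≤ −(i+1) (i.e. deg numerator + i + 1 ≤ deg denominator, so that z^{i+1}F(z) is regular at infinity). Then there exist scalars x_l(j) ∈ ℂ, for j ∈ J and 0 ≤ l ≤ m(j)−1, such that F = Σ_{j∈J} Σ_{l=0}^{m(j)−1} C(x_l(j)) / ( X^i · (X − C(w j))^{m(j)−l} ). (Lemma 5.3 (lem:partialfraction) of the paper.) -/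
/-!
Clearing denominators, `F = p / (X ^ i * ∏ j, (X - w j) ^ m j)` with `deg p < ∑ j, m j` by the
degree hypothesis. Polynomial partial fractions with respect to the pairwise coprime linear
factors `X - w j` (so all remainders are constants) give
`p = q * ∏ j, (X - w j) ^ m j + ∑ j, ∑ l < m j, c j l * (X - w j) ^ l * ∏ k ≠ j, (X - w k) ^ m k`.
The double sum has degree `< ∑ j, m j`, hence `q = 0`, and dividing by the denominator term by
term gives the decomposition.
-/

open Polynomial

namespace Polynomial

variable {K ι : Type*}

theorem natDegree_prod_X_sub_C_pow_le [CommRing K] (w : ι → K) (m : ι → ℕ) (s : Finset ι) :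
    (∏ k ∈ s, (X - C (w k)) ^ m k).natDegree ≤ ∑ k ∈ s, m k :=
  (natDegree_prod_le _ _).trans <| Finset.sum_le_sum fun k _ =>
    natDegree_pow_le.trans <| by simpa using Nat.mul_le_mul_left (m k) (natDegree_X_sub_C_le (w k))

theorem natDegree_prod_X_sub_C_pow [CommRing K] [Nontrivial K] (w : ι → K) (m : ι → ℕ)
    (s : Finset ι) : (∏ k ∈ s, (X - C (w k)) ^ m k).natDegree = ∑ k ∈ s, m k := by
  rw [natDegree_prod_of_monic _ _ fun k _ => (monic_X_sub_C (w k)).pow _]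
  exact Finset.sum_congr rfl fun k _ => by
    rw [(monic_X_sub_C (w k)).natDegree_pow, natDegree_X_sub_C, mul_one]

theorem degree_sum_C_mul_X_sub_C_pow_mul_prod_lt [CommRing K] [DecidableEq ι]
    (w : ι → K) (m : ι → ℕ) (s : Finset ι) (c : ι → ℕ → K) :
    (∑ i ∈ s, ∑ l ∈ Finset.range (m i),
      C (c i l) * (X - C (w i)) ^ l * ∏ k ∈ s.erase i, (X - C (w k)) ^ m k).degree <
        ((∑ i ∈ s, m i : ℕ) : WithBot ℕ) := by
  refine (degree_sum_le _ _).trans_lt <| (Finset.sup_lt_iff (WithBot.bot_lt_coe _)).2 fun i hi => ?_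
  refine (degree_sum_le _ _).trans_lt <| (Finset.sup_lt_iff (WithBot.bot_lt_coe _)).2 fun l hl => ?_
  refine degree_le_natDegree.trans_lt ?_
  have hterm : (C (c i l) * (X - C (w i)) ^ l * ∏ k ∈ s.erase i, (X - C (w k)) ^ m k).natDegree
      ≤ l + ∑ k ∈ s.erase i, m k := by
    rw [mul_assoc]
    refine (natDegree_C_mul_le _ _).trans <| natDegree_mul_le.trans <| add_le_add ?_
      (natDegree_prod_X_sub_C_pow_le w m _)
    simpa using natDegree_pow_le (p := X - C (w i)) (n := l) |>.trans
      (Nat.mul_le_mul_left l (natDegree_X_sub_C_le (w i)))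
  have hsplit := Finset.sum_erase_add s m hi
  have hlt := Finset.mem_range.1 hl
  exact_mod_cast (by omega : _ < ∑ i ∈ s, m i)

theorem exists_eq_sum_C_mul_X_sub_C_pow_mul_prod [Field K] [DecidableEq ι] {w : ι → K}
    (hw : Function.Injective w) (m : ι → ℕ) (s : Finset ι) {p : K[X]}
    (hp : p.degree < ((∑ i ∈ s, m i : ℕ) : WithBot ℕ)) :
    ∃ c : ι → ℕ → K, p = ∑ i ∈ s, ∑ l ∈ Finset.range (m i),
      C (c i l) * (X - C (w i)) ^ l * ∏ k ∈ s.erase i, (X - C (w k)) ^ m k := by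
  obtain ⟨q, r, hr, hpqr⟩ := eq_quo_mul_prod_pow_add_sum_rem_mul_prod_pow p
    (fun i _ => monic_X_sub_C (w i)) ((pairwise_coprime_X_sub_C hw).set_pairwise _) m
  let c i l := if h : l < m i then (r i ⟨l, h⟩).coeff 0 else 0
  have hrC : ∀ i ∈ s, ∀ l (h : l < m i), r i ⟨l, h⟩ = C (c i l) := fun i hi l h => by
    simp only [c, dif_pos h]
    refine eq_C_of_degree_le_zero (Nat.WithBot.lt_one_iff_le_zero.1 ?_)
    simpa using hr i hi ⟨l, h⟩
  have hsum : ∑ i ∈ s, ∑ j, r i j * (X - C (w i)) ^ j.1 * ∏ k ∈ s.erase i, (X - C (w k)) ^ m k =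
      ∑ i ∈ s, ∑ l ∈ Finset.range (m i),
        C (c i l) * (X - C (w i)) ^ l * ∏ k ∈ s.erase i, (X - C (w k)) ^ m k := by
    refine Finset.sum_congr rfl fun i hi => ?_
    rw [Finset.sum_fin_eq_sum_range]
    refine Finset.sum_congr rfl fun l hl => ?_
    rw [dif_pos (Finset.mem_range.1 hl), hrC i hi l]
  have hmonic : (∏ k ∈ s, (X - C (w k)) ^ m k).Monic :=
    monic_prod_of_monic _ _ fun k _ => (monic_X_sub_C (w k)).pow _
  have hdegree : (∏ k ∈ s, (X - C (w k)) ^ m k).degree = ((∑ i ∈ s, m i : ℕ) : WithBot ℕ) := by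
    rw [degree_eq_natDegree hmonic.ne_zero, natDegree_prod_X_sub_C_pow]
  have hq : q = 0 := by
    have hdiv := (div_modByMonic_unique (f := p) q _ hmonic
      ⟨by rw [hpqr, hsum, add_comm, mul_comm],
        hdegree ▸ degree_sum_C_mul_X_sub_C_pow_mul_prod_lt w m s c⟩).1
    rwa [← hdiv, divByMonic_eq_zero_iff hmonic, hdegree]
  exact ⟨c, by rw [hpqr, hq, zero_mul, zero_add, hsum]⟩

end Polynomial

namespace RatFunc

variable {K ι : Type*} [Field K]

theorem exists_eq_div_of_denom_dvd {F : RatFunc K} {D : K[X]} (hD : D ≠ 0) (hdvd : F.denom ∣ D) :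
    ∃ p : K[X], F = algebraMap K[X] (RatFunc K) p / algebraMap K[X] (RatFunc K) D ∧
      (p.natDegree : ℤ) ≤ F.intDegree + D.natDegree := by
  obtain ⟨q, rfl⟩ := hdvd
  have hq : q ≠ 0 := right_ne_zero_of_mul hD
  refine ⟨F.num * q, ?_, ?_⟩
  · rw [map_mul, map_mul, mul_div_mul_right _ _ (by simpa using hq), num_div_denom]
  · rw [intDegree, natDegree_mul F.denom_ne_zero hq]
    have hnum := natDegree_mul_le (p := F.num) (q := q)
    omega

theorem algebraMap_div_X_pow_mul_prod_X_sub_C_pow [DecidableEq ι] (w : ι → K) (m : ι → ℕ)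
    {s : Finset ι} {j : ι} (hj : j ∈ s) {l : ℕ} (hl : l ≤ m j) (a : K) (n : ℕ) :
    algebraMap K[X] (RatFunc K)
        (Polynomial.C a * (Polynomial.X - Polynomial.C (w j)) ^ l *
          ∏ k ∈ s.erase j, (Polynomial.X - Polynomial.C (w k)) ^ m k) /
      algebraMap K[X] (RatFunc K)
        (Polynomial.X ^ n * ∏ k ∈ s, (Polynomial.X - Polynomial.C (w k)) ^ m k) =
      C a / (X ^ n * (X - C (w j)) ^ (m j - l)) := by
  have hX_sub_C (k : ι) : (X - C (w k) : RatFunc K) ≠ 0 := by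
    rw [← algebraMap_X, ← algebraMap_C, ← map_sub]
    exact (map_ne_zero_iff _ (algebraMap_injective K)).2 (Polynomial.X_sub_C_ne_zero (w k))
  simp only [map_mul, map_pow, map_sub, map_prod, algebraMap_X, algebraMap_C]
  rw [← Finset.mul_prod_erase s _ hj, ← Nat.sub_add_cancel hl, pow_add, Nat.add_sub_cancel]
  have hE : ∏ k ∈ s.erase j, (X - C (w k) : RatFunc K) ^ m k ≠ 0 :=
    Finset.prod_ne_zero_iff.2 fun k _ => pow_ne_zero _ (hX_sub_C k)
  have hY := hX_sub_C j
  have hX : (X : RatFunc K) ≠ 0 := X_ne_zero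
  field_simp

end RatFunc

theorem ratFunc_partial_fraction_general
    {J : Type*} [Fintype J] (i : ℕ)
    (w : J → ℂ) (hw : Function.Injective w)
    (m : J → ℕ)
    (F : RatFunc ℂ)
    (hden : F.denom ∣ Polynomial.X ^ i * ∏ j : J, (Polynomial.X - Polynomial.C (w j)) ^ m j)
    (hdeg : F.intDegree ≤ -(i + 1 : ℤ)) :
    ∃ x : J → ℕ → ℂ,
      F = ∑ j : J, ∑ l ∈ Finset.range (m j),
        RatFunc.C (x j l) / (RatFunc.X ^ i * (RatFunc.X - RatFunc.C (w j)) ^ (m j - l)) := by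
  classical
  have hmonic : (∏ j : J, (X - C (w j)) ^ m j).Monic :=
    monic_prod_of_monic _ _ fun j _ => (monic_X_sub_C (w j)).pow _
  obtain ⟨p, rfl, hp⟩ :=
    RatFunc.exists_eq_div_of_denom_dvd ((monic_X_pow i).mul hmonic).ne_zero hden
  have hdegp : p.degree < ((∑ j : J, m j : ℕ) : WithBot ℕ) := by
    rw [(monic_X_pow i).natDegree_mul hmonic, natDegree_X_pow, natDegree_prod_X_sub_C_pow] at hp
    exact degree_le_natDegree.trans_lt (by exact_mod_cast (by omega : p.natDegree < ∑ j : J, m j))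
  obtain ⟨x, rfl⟩ := exists_eq_sum_C_mul_X_sub_C_pow_mul_prod hw m Finset.univ hdegp
  refine ⟨x, ?_⟩
  simp only [map_sum, Finset.sum_div]
  refine Finset.sum_congr rfl fun j hj => Finset.sum_congr rfl fun l hl => ?_
  exact RatFunc.algebraMap_div_X_pow_mul_prod_X_sub_C_pow w m hj (Finset.mem_range.1 hl).le _ i

/-- Lemma 5.3 (lem:partialfraction) of the paper: let `F` be a rational function whose
denominator divides `X^i · Π_{j∈J} (X − w_j)^{m_j}` (with the `w_j` nonzero and pairwise
distinct and `m_j ≥ 1`), and which vanishes to order at least `i+1` at infinity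
(`intDegree F ≤ −(i+1)`).  Then `F` admits the partial fraction decomposition
`F = Σ_{j∈J} Σ_{l=0}^{m_j−1} x_l(j) / ( X^i (X − w_j)^{m_j−l} )`. -/
theorem ratFunc_partial_fraction
    {J : Type*} [Fintype J] (i : ℕ)
    (w : J → ℂ) (hw : Function.Injective w) (hw0 : ∀ j, w j ≠ 0)
    (m : J → ℕ) (hm : ∀ j, 1 ≤ m j)
    (F : RatFunc ℂ)
    (hden : F.denom ∣ Polynomial.X ^ i * ∏ j : J, (Polynomial.X - Polynomial.C (w j)) ^ m j)
    (hdeg : F.intDegree ≤ -(i + 1 : ℤ)) :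
    ∃ x : J → ℕ → ℂ,
      F = ∑ j : J, ∑ l ∈ Finset.range (m j),
        RatFunc.C (x j l) / (RatFunc.X ^ i * (RatFunc.X - RatFunc.C (w j)) ^ (m j - l)) :=
  ratFunc_partial_fraction_general i w hw m F hden hdeg
end

section
/- For all real x, y, the family ( (m,n) ↦ d(m,n)·x^m·y^n ) indexed by ℕ×ℕ is summable, and Σ_{m,n ∈ ℕ} d(m,n)·x^m·y^n = d(0,0) · exp( K·x·(1 + y/(1+q)) ). (The generating-function part of the Appendix Lemma (lem:recursion) of the paper.) -/
/-! The recursion solves explicitly to `d m n = d 0 0 * K ^ m / m ! * choose m n / (1 + q) ^ n`.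
Summing the generating function over `n` first, each row is a binomial expansion
`(K x) ^ m / m ! * (1 + y / (1 + q)) ^ m`, and the rows add up to the exponential series;
absolute convergence comes from the same computation with `|K x|` and `|y / (1 + q)|`. -/

open Nat

theorem hasSum_choose_mul_pow (m : ℕ) (b : ℝ) :
    HasSum (fun n => (m.choose n : ℝ) * b ^ n) ((1 + b) ^ m) := by
  rw [add_comm, add_pow]
  refine (hasSum_sum_of_ne_finset_zero fun n hn => ?_).congr_fun ?_
  · simp [Nat.choose_eq_zero_of_lt (by simpa using hn : m < n)]
  · intro n; ring

theorem Real.hasSum_pow_div_factorial (a : ℝ) : HasSum (fun n => a ^ n / (n ! : ℝ)) (Real.exp a) :=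
  Real.exp_eq_exp_ℝ ▸ NormedSpace.expSeries_div_hasSum_exp a

theorem summable_pow_div_factorial_mul_choose_mul_pow (a b : ℝ) :
    Summable fun p : ℕ × ℕ => a ^ p.1 / (p.1 ! : ℝ) * (p.1.choose p.2 * b ^ p.2) := by
  have hnonneg :
      Summable fun p : ℕ × ℕ => |a| ^ p.1 / (p.1 ! : ℝ) * (p.1.choose p.2 * |b| ^ p.2) := by
    refine (summable_prod_of_nonneg fun p => by positivity).2 ⟨fun m => ?_, ?_⟩
    · exact ((hasSum_choose_mul_pow m |b|).mul_left (|a| ^ m / m !)).summable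
    · refine (Real.summable_pow_div_factorial (|a| * (1 + |b|))).congr fun m => ?_
      rw [((hasSum_choose_mul_pow m |b|).mul_left (|a| ^ m / m !)).tsum_eq, mul_pow]
      ring
  refine hnonneg.of_norm_bounded fun p => le_of_eq ?_
  simp

theorem hasSum_pow_div_factorial_mul_choose_mul_pow (a b : ℝ) :
    HasSum (fun p : ℕ × ℕ => a ^ p.1 / (p.1 ! : ℝ) * (p.1.choose p.2 * b ^ p.2))
      (Real.exp (a * (1 + b))) := by
  have hsum := (summable_pow_div_factorial_mul_choose_mul_pow a b).hasSum
  have hrows := hsum.prod_fiberwise fun m => (hasSum_choose_mul_pow m b).mul_left (a ^ m / m !)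
  have hexp : HasSum (fun m => a ^ m / (m ! : ℝ) * (1 + b) ^ m) (Real.exp (a * (1 + b))) := by
    simpa [mul_pow, div_mul_eq_mul_div] using Real.hasSum_pow_div_factorial (a * (1 + b))
  rwa [hrows.unique hexp] at hsum

theorem add_one_mul_choose_succ_add_mul_choose (m n : ℕ) (q : ℝ) :
    ((m : ℝ) + 1) * (m.choose (n + 1) + (1 + q) * m.choose n) =
      (m + 1 + (n + 1) * q) * (m + 1).choose (n + 1) := by
  have hpascal : ((m + 1).choose (n + 1) : ℝ) = m.choose n + m.choose (n + 1) := by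
    exact_mod_cast Nat.choose_succ_succ m n
  have habsorb : ((m : ℝ) + 1) * m.choose n = (m + 1).choose (n + 1) * (n + 1) := by
    exact_mod_cast Nat.add_one_mul_choose_eq m n
  linear_combination -(m + 1 : ℝ) * hpascal + q * habsorb

theorem eq_closed_form_of_recursion {q K : ℝ} {d : ℕ → ℕ → ℝ}
    (hden : ∀ m n : ℕ, (m, n) ≠ (0, 0) → (m : ℝ) + n * q ≠ 0)
    (hrec : ∀ m n : ℕ, (m, n) ≠ (0, 0) →
      d m n = K * ((if m = 0 then 0 else d (m - 1) n) +
        (if m = 0 ∨ n = 0 then 0 else d (m - 1) (n - 1))) / ((m : ℝ) + n * q))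
    (m n : ℕ) : d m n = d 0 0 * (K ^ m / m !) * (m.choose n / (1 + q) ^ n) := by
  have h1q : 1 + q ≠ 0 := by simpa using hden 1 1 (by simp)
  induction m generalizing n with
  | zero =>
    cases n with
    | zero => simp
    | succ n => simp [hrec 0 (n + 1) (by simp)]
  | succ m ih =>
    rw [hrec (m + 1) n (by simp), Nat.factorial_succ]
    cases n with
    | zero =>
      simp only [if_neg m.succ_ne_zero, or_true, if_true, Nat.add_sub_cancel, ih 0,
        Nat.choose_zero_right]
      push_cast
      field_simp
      ring
    | succ n =>
      simp only [Nat.add_sub_cancel, Nat.succ_ne_zero, or_self, if_false, ih]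
      have hD := hden (m + 1) (n + 1) (by simp)
      have hidentity := add_one_mul_choose_succ_add_mul_choose m n q
      push_cast at hD ⊢
      rw [div_eq_iff hD]
      field_simp
      linear_combination d 0 0 * K * K ^ m * (1 + q) ^ n * hidentity

theorem recursion_generating_function_general (q K : ℝ) (d : ℕ → ℕ → ℝ)
    (hden : ∀ m n : ℕ, (m, n) ≠ (0, 0) → (m : ℝ) + n * q ≠ 0)
    (hrec : ∀ m n : ℕ, (m, n) ≠ (0, 0) →
      d m n = K * ((if m = 0 then 0 else d (m - 1) n) +
        (if m = 0 ∨ n = 0 then 0 else d (m - 1) (n - 1))) / ((m : ℝ) + n * q)) :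
    ∀ x y : ℝ,
      Summable (fun p : ℕ × ℕ => d p.1 p.2 * x ^ p.1 * y ^ p.2) ∧
      ∑' p : ℕ × ℕ, d p.1 p.2 * x ^ p.1 * y ^ p.2 =
        d 0 0 * Real.exp (K * x * (1 + y / (1 + q))) := by
  intro x y
  have hterm : ∀ p : ℕ × ℕ, d p.1 p.2 * x ^ p.1 * y ^ p.2 =
      d 0 0 * ((K * x) ^ p.1 / (p.1 ! : ℝ) * (p.1.choose p.2 * (y / (1 + q)) ^ p.2)) := by
    rintro ⟨m, n⟩
    rw [eq_closed_form_of_recursion hden hrec, mul_pow, div_pow]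
    ring
  have hsum := ((hasSum_pow_div_factorial_mul_choose_mul_pow (K * x) (y / (1 + q))).mul_left
    (d 0 0)).congr_fun hterm
  exact ⟨hsum.summable, hsum.tsum_eq⟩

/-- The generating-function part of the Appendix Lemma (lem:recursion) of the paper: if
`d : ℕ → ℕ → ℝ` (extended by zero to negative indices) satisfies
`d(m,n) = K (d(m−1,n) + d(m−1,n−1)) / (m + n q)` for all `(m,n) ≠ (0,0)`, with `q > −1` and
all denominators nonzero, then for all real `x, y` the family `d(m,n) x^m y^n` is summable and
`Σ_{m,n} d(m,n) x^m y^n = d(0,0) · exp(K x (1 + y/(1+q)))`. -/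
theorem recursion_generating_function (q K : ℝ) (hq : -1 < q) (d : ℕ → ℕ → ℝ)
    (hden : ∀ m n : ℕ, (m, n) ≠ (0, 0) → (m : ℝ) + n * q ≠ 0)
    (hrec : ∀ m n : ℕ, (m, n) ≠ (0, 0) →
      d m n = K * ((if m = 0 then 0 else d (m - 1) n) +
        (if m = 0 ∨ n = 0 then 0 else d (m - 1) (n - 1))) / ((m : ℝ) + n * q)) :
    ∀ x y : ℝ,
      Summable (fun p : ℕ × ℕ => d p.1 p.2 * x ^ p.1 * y ^ p.2) ∧
      ∑' p : ℕ × ℕ, d p.1 p.2 * x ^ p.1 * y ^ p.2 =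
        d 0 0 * Real.exp (K * x * (1 + y / (1 + q))) :=
  recursion_generating_function_general q K d hden hrec
end

section
/- Then c(m,n) ≤ K^m / ( (1−κ)^n · (m−n)! · n! ) for all m, n ∈ ℕ with n ≤ m. (The comparison estimate in the proof of Proposition 5.6 (thm:frobeniusz) of the paper, bounding the Frobenius coefficients of a solution at the Fuchsian singularity z = 0.) -/
/-!
The bound `M m n = K^m / ((1-κ)^n (m-n)! n!)`, set to `0` for `n > m`, solves the recurrence with
equality: splitting `m + 1 - nκ = (m + 1 - n) + n(1 - κ)`, the two summands absorb the new
factors of `(m + 1 - n)!` and of `(1 - κ)^n n!` respectively. A nonnegative multiplier `K` and a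
positive denominator make the recurrence monotone, so `c ≤ M` follows by induction on `m`.
-/

noncomputable def frobeniusMajorant (κ K : ℝ) (m n : ℕ) : ℝ :=
  if n ≤ m then K ^ m / ((1 - κ) ^ n * (m - n).factorial * n.factorial) else 0

section
variable {κ : ℝ} (K : ℝ)

theorem sub_mul_frobeniusMajorant_succ (hκ : κ ≠ 1) (m n : ℕ) :
    ((m : ℝ) + 1 - n) * frobeniusMajorant κ K (m + 1) n = K * frobeniusMajorant κ K m n := by
  have h1κ : 1 - κ ≠ 0 := sub_ne_zero.2 hκ.symm
  unfold frobeniusMajorant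
  rcases lt_trichotomy n (m + 1) with h | rfl | h
  · have hn : n ≤ m := by omega
    rw [if_pos hn, if_pos h.le, Nat.succ_sub hn, Nat.factorial_succ]
    have hpos : (m : ℝ) - n + 1 ≠ 0 := by
      have : (n : ℝ) ≤ m := by exact_mod_cast hn
      linarith
    push_cast [Nat.cast_sub hn]
    field_simp
    ring
  · simp
  · rw [if_neg (by omega), if_neg (by omega), mul_zero, mul_zero]

theorem mul_frobeniusMajorant_succ_succ (hκ : κ ≠ 1) (m n : ℕ) :
    ((n : ℝ) + 1) * (1 - κ) * frobeniusMajorant κ K (m + 1) (n + 1) =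
      K * frobeniusMajorant κ K m n := by
  have h1κ : 1 - κ ≠ 0 := sub_ne_zero.2 hκ.symm
  unfold frobeniusMajorant
  by_cases hn : n ≤ m
  · rw [if_pos hn, if_pos (by omega), Nat.add_sub_add_right, Nat.factorial_succ]
    push_cast
    field_simp
    ring
  · rw [if_neg hn, if_neg (by omega), mul_zero, mul_zero]

theorem frobeniusMajorant_succ_recurrence (hκ : κ ≠ 1) (m n : ℕ) :
    ((m : ℝ) + 1 - n * κ) * frobeniusMajorant κ K (m + 1) n =
      K * (frobeniusMajorant κ K m n + if n = 0 then 0 else frobeniusMajorant κ K m (n - 1)) := by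
  have hleft := sub_mul_frobeniusMajorant_succ K hκ m n
  cases n with
  | zero => simpa using hleft
  | succ n =>
    have hright := mul_frobeniusMajorant_succ_succ K hκ m n
    push_cast at hleft ⊢
    linear_combination hleft + hright

end

theorem sub_mul_pos_of_le {κ : ℝ} (hκ : κ < 1) {m n : ℕ} (hm : 0 < m) (hn : n ≤ m) :
    0 < (m : ℝ) - n * κ := by
  have hn' : (n : ℝ) ≤ m := by exact_mod_cast hn
  rcases n.eq_zero_or_pos with rfl | hn0
  · simpa using hm
  · have : 0 < (n : ℝ) * (1 - κ) := mul_pos (by exact_mod_cast hn0) (by linarith)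
    linarith

theorem le_frobeniusMajorant {κ K : ℝ} (hκ : κ < 1) (hK : 0 ≤ K) {c : ℕ → ℕ → ℝ}
    (h00 : c 0 0 ≤ 1) (hvanish : ∀ m n : ℕ, m < n → c m n = 0)
    (hrec : ∀ m n : ℕ, n ≤ m + 1 →
      c (m + 1) n ≤ K * (c m n + if n = 0 then 0 else c m (n - 1)) / ((m : ℝ) + 1 - n * κ)) :
    ∀ m n, c m n ≤ frobeniusMajorant κ K m n := by
  intro m
  induction m with
  | zero =>
    intro n
    cases n with
    | zero => simpa [frobeniusMajorant] using h00
    | succ n => simp [frobeniusMajorant, hvanish 0 (n + 1) n.succ_pos]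
  | succ m ih =>
    intro n
    by_cases hn : n ≤ m + 1
    swap
    · rw [hvanish _ _ (by omega), frobeniusMajorant, if_neg hn]
    have hd : 0 < (m : ℝ) + 1 - n * κ := by
      simpa using sub_mul_pos_of_le hκ m.succ_pos hn
    have hsum : (c m n + if n = 0 then 0 else c m (n - 1)) ≤
        frobeniusMajorant κ K m n + if n = 0 then 0 else frobeniusMajorant κ K m (n - 1) := by
      gcongr ?_ + ?_
      · exact ih n
      · split_ifs
        exacts [le_rfl, ih _]
    calc c (m + 1) n
        ≤ K * (c m n + if n = 0 then 0 else c m (n - 1)) / ((m : ℝ) + 1 - n * κ) := hrec m n hn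
      _ ≤ K * (frobeniusMajorant κ K m n + if n = 0 then 0 else frobeniusMajorant κ K m (n - 1)) /
            ((m : ℝ) + 1 - n * κ) := by gcongr
      _ = frobeniusMajorant κ K (m + 1) n := by
        rw [← frobeniusMajorant_succ_recurrence K hκ.ne m n]
        field_simp

theorem frobenius_coefficient_bound_general (κ K : ℝ) (hκ1 : κ < 1) (hK : 0 ≤ K)
    (c : ℕ → ℕ → ℝ) (h00 : c 0 0 ≤ 1)
    (hvanish : ∀ m n : ℕ, m < n → c m n = 0)
    (hrec : ∀ m n : ℕ, (m, n) ≠ (0, 0) → n ≤ m →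
      c m n ≤ K * ((if m = 0 then 0 else c (m - 1) n) +
        (if m = 0 ∨ n = 0 then 0 else c (m - 1) (n - 1))) / ((m : ℝ) - n * κ)) :
    ∀ m n : ℕ, n ≤ m →
      c m n ≤ K ^ m / ((1 - κ) ^ n * (m - n).factorial * n.factorial) := by
  have hrec' : ∀ m n : ℕ, n ≤ m + 1 →
      c (m + 1) n ≤ K * (c m n + if n = 0 then 0 else c m (n - 1)) / ((m : ℝ) + 1 - n * κ) :=
    fun m n hn => by simpa using hrec (m + 1) n (by simp) hn
  intro m n hn
  simpa [frobeniusMajorant, hn] using le_frobeniusMajorant hκ1 hK h00 hvanish hrec' m n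

/-- The comparison estimate in the proof of Proposition 5.6 (thm:frobeniusz) of the paper:
if the nonnegative coefficients `c(m,n)` (vanishing for `n > m`, with `c(0,0) ≤ 1`, extended by
zero to negative indices) satisfy
`c(m,n) ≤ K (c(m−1,n) + c(m−1,n−1)) / (m − n κ)` for `(m,n) ≠ (0,0)`, `n ≤ m`, where
`0 < κ < 1` and `K ≥ 0`, then `c(m,n) ≤ K^m / ((1−κ)^n (m−n)! n!)` for all `n ≤ m`. -/
theorem frobenius_coefficient_bound (κ K : ℝ) (hκ0 : 0 < κ) (hκ1 : κ < 1) (hK : 0 ≤ K)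
    (c : ℕ → ℕ → ℝ) (hpos : ∀ m n : ℕ, 0 ≤ c m n) (h00 : c 0 0 ≤ 1)
    (hvanish : ∀ m n : ℕ, m < n → c m n = 0)
    (hrec : ∀ m n : ℕ, (m, n) ≠ (0, 0) → n ≤ m →
      c m n ≤ K * ((if m = 0 then 0 else c (m - 1) n) +
        (if m = 0 ∨ n = 0 then 0 else c (m - 1) (n - 1))) / ((m : ℝ) - n * κ)) :
    ∀ m n : ℕ, n ≤ m →
      c m n ≤ K ^ m / ((1 - κ) ^ n * (m - n).factorial * n.factorial) :=
  frobenius_coefficient_bound_general κ K hκ1 hK c h00 hvanish hrec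
end

section
/- For every λ ∈ ℂ and every real t > 0, the family ( (m,n) ↦ ( t^m · λ^n · t^{−κ·n} ) • c(m,n) ) indexed by ℕ×ℕ is summable in E; denoting its sum by F(t), one has ‖F(t) − c(0,0)‖ ≤ exp( K·( t + |λ|·t^{1−κ}/(1−κ) ) ) − 1, and in particular F(t) → c(0,0) as t → 0⁺. (The convergence and limit estimate in the proof of Proposition 5.6 (thm:frobeniusz) of the paper, showing that the double series Σ c_{m,n} z^m (λ z^{−κ})^n defining the Frobenius solution converges and tends to its leading coefficient as z → 0.) -/
/-! With `A = K t` and `B = K ‖λ‖ t^(1-κ) / (1-κ)` the coefficient bound gives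
`‖(t^m λ^n t^(-κn)) • c(m,n)‖ ≤ A^(m-n)/(m-n)! · B^n/n!`. Reindexing `n ≤ m` by `(m - n, n)` turns
this majorant into the product of the exponential series of `A` and `B`, so the double series
converges absolutely with total majorant `e^(A+B)`. Its `(0,0)` term is `c(0,0)`, majorized by `1`,
hence `‖F(t) - c(0,0)‖ ≤ e^(A+B) - 1`, which tends to `0` with `t` because `1 - κ > 0`. -/

open Filter Topology Nat

noncomputable def triangularExpTerm (A B : ℝ) (p : ℕ × ℕ) : ℝ :=
  if p.2 ≤ p.1 then A ^ (p.1 - p.2) / (p.1 - p.2)! * (B ^ p.2 / p.2 !) else 0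

lemma Real.hasSum_exp_mul_exp (A B : ℝ) :
    HasSum (fun q : ℕ × ℕ => A ^ q.1 / q.1 ! * (B ^ q.2 / q.2 !)) (Real.exp A * Real.exp B) := by
  have hexp (x : ℝ) : HasSum (fun n => x ^ n / n !) (Real.exp x) := by
    rw [Real.exp_eq_exp_ℝ]
    exact NormedSpace.expSeries_div_hasSum_exp x
  exact (hexp A).mul (hexp B) <| summable_mul_of_summable_norm
    (f := fun n => A ^ n / n !) (g := fun n => B ^ n / n !)
    (NormedSpace.norm_expSeries_div_summable (𝔸 := ℝ) A)
    (NormedSpace.norm_expSeries_div_summable (𝔸 := ℝ) B)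

lemma hasSum_triangularExpTerm (A B : ℝ) :
    HasSum (triangularExpTerm A B) (Real.exp (A + B)) := by
  have hinj : Function.Injective fun q : ℕ × ℕ => (q.1 + q.2, q.2) := by
    rintro ⟨j, n⟩ ⟨j', n'⟩ h
    simp only [Prod.mk.injEq] at h
    ext <;> omega
  rw [← hinj.hasSum_iff, Real.exp_add]
  · convert Real.hasSum_exp_mul_exp A B with q
    simp [triangularExpTerm]
  · rintro ⟨m, n⟩ hmn
    have hnm : ¬ n ≤ m := fun h => hmn ⟨(m - n, n), by simp [Nat.sub_add_cancel h]⟩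
    simp [triangularExpTerm, hnm]

lemma norm_sub_le_of_hasSum_of_norm_le {ι E : Type*} [SeminormedAddCommGroup E] [DecidableEq ι]
    {f : ι → E} {g : ι → ℝ} {a : E} {b : ℝ} (hf : HasSum f a) (hg : HasSum g b)
    (hfg : ∀ i, ‖f i‖ ≤ g i) (i : ι) : ‖a - f i‖ ≤ b - g i := by
  have := (hf.update i 0).norm_le_of_bounded (hg.update i 0) fun j => by
    rcases eq_or_ne j i with rfl | hj <;> simp [*]
  simpa [neg_add_eq_sub] using this

noncomputable def frobeniusTerm {E : Type*} [NormedAddCommGroup E] [NormedSpace ℂ E]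
    (κ : ℝ) (c : ℕ → ℕ → E) (lam : ℂ) (t : ℝ) (p : ℕ × ℕ) : E :=
  (((t ^ p.1 : ℝ) : ℂ) * lam ^ p.2 * ((t ^ (-(κ * (p.2 : ℝ))) : ℝ) : ℂ)) • c p.1 p.2

lemma Real.rpow_one_sub_pow {t : ℝ} (ht : 0 < t) (κ : ℝ) (n : ℕ) :
    (t ^ (1 - κ)) ^ n = t ^ n * t ^ (-(κ * n)) := by
  rw [← Real.rpow_mul_natCast ht.le, ← Real.rpow_natCast, ← Real.rpow_add ht]
  ring_nf

section Frobenius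

variable {E : Type*} [NormedAddCommGroup E] [NormedSpace ℂ E] {κ K : ℝ} {c : ℕ → ℕ → E}

lemma norm_frobeniusTerm_le (hκ : κ ≠ 1) (hvanish : ∀ m n : ℕ, m < n → c m n = 0)
    (hbound : ∀ m n : ℕ, n ≤ m →
      ‖c m n‖ ≤ K ^ m / ((1 - κ) ^ n * (m - n).factorial * n.factorial))
    (lam : ℂ) {t : ℝ} (ht : 0 < t) (p : ℕ × ℕ) :
    ‖frobeniusTerm κ c lam t p‖ ≤
      triangularExpTerm (K * t) (K * ‖lam‖ * t ^ (1 - κ) / (1 - κ)) p := by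
  obtain ⟨m, n⟩ := p
  by_cases hnm : n ≤ m
  · obtain ⟨j, rfl⟩ := Nat.exists_eq_add_of_le' hnm
    have hκ' : 1 - κ ≠ 0 := sub_ne_zero.2 hκ.symm
    have hnorm : ‖frobeniusTerm κ c lam t (j + n, n)‖ =
        t ^ (j + n) * ‖lam‖ ^ n * t ^ (-(κ * n)) * ‖c (j + n) n‖ := by
      simp [frobeniusTerm, norm_smul, abs_of_pos ht, abs_of_pos (Real.rpow_pos_of_pos ht _)]
    have hmajorant : t ^ (j + n) * ‖lam‖ ^ n * t ^ (-(κ * n)) *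
          (K ^ (j + n) / ((1 - κ) ^ n * ((j + n) - n)! * n !)) =
        triangularExpTerm (K * t) (K * ‖lam‖ * t ^ (1 - κ) / (1 - κ)) (j + n, n) := by
      simp only [triangularExpTerm, hnm, if_true, Nat.add_sub_cancel, div_pow, mul_pow,
        Real.rpow_one_sub_pow ht]
      field_simp
      ring
    rw [hnorm, ← hmajorant]
    gcongr
    exact hbound _ _ hnm
  · simp [frobeniusTerm, triangularExpTerm, hnm, hvanish m n (not_le.1 hnm)]

variable [CompleteSpace E]

lemma summable_frobeniusTerm (hκ : κ ≠ 1) (hvanish : ∀ m n : ℕ, m < n → c m n = 0)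
    (hbound : ∀ m n : ℕ, n ≤ m →
      ‖c m n‖ ≤ K ^ m / ((1 - κ) ^ n * (m - n).factorial * n.factorial))
    (lam : ℂ) {t : ℝ} (ht : 0 < t) : Summable (frobeniusTerm κ c lam t) :=
  .of_norm_bounded (hasSum_triangularExpTerm _ _).summable
    (norm_frobeniusTerm_le hκ hvanish hbound lam ht)

lemma norm_tsum_frobeniusTerm_sub_le (hκ : κ ≠ 1) (hvanish : ∀ m n : ℕ, m < n → c m n = 0)
    (hbound : ∀ m n : ℕ, n ≤ m →
      ‖c m n‖ ≤ K ^ m / ((1 - κ) ^ n * (m - n).factorial * n.factorial))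
    (lam : ℂ) {t : ℝ} (ht : 0 < t) :
    ‖∑' p, frobeniusTerm κ c lam t p - c 0 0‖ ≤
      Real.exp (K * (t + ‖lam‖ * t ^ (1 - κ) / (1 - κ))) - 1 := by
  have h := norm_sub_le_of_hasSum_of_norm_le
    (summable_frobeniusTerm hκ hvanish hbound lam ht).hasSum (hasSum_triangularExpTerm _ _)
    (norm_frobeniusTerm_le hκ hvanish hbound lam ht) (0, 0)
  rw [show frobeniusTerm κ c lam t (0, 0) = c 0 0 by simp [frobeniusTerm],
    show triangularExpTerm _ _ (0, 0) = 1 by simp [triangularExpTerm]] at h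
  convert h using 3
  ring

end Frobenius

lemma tendsto_exp_mul_add_rpow_sub_one {κ : ℝ} (hκ : κ < 1) (K L : ℝ) :
    Tendsto (fun t : ℝ => Real.exp (K * (t + L * t ^ (1 - κ) / (1 - κ))) - 1) (𝓝[>] 0) (𝓝 0) := by
  have hrpow := Real.continuousAt_rpow_const 0 (1 - κ) (Or.inr (by linarith))
  have hcont : ContinuousAt
      (fun t : ℝ => Real.exp (K * (t + L * t ^ (1 - κ) / (1 - κ))) - 1) 0 := by
    fun_prop
  simpa [Real.zero_rpow (by linarith : 1 - κ ≠ 0)] using hcont.tendsto.mono_left nhdsWithin_le_nhds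

theorem frobenius_series_convergence_general (κ K : ℝ) (hκ1 : κ < 1)
    {E : Type*} [NormedAddCommGroup E] [NormedSpace ℂ E] [CompleteSpace E]
    (c : ℕ → ℕ → E)
    (hvanish : ∀ m n : ℕ, m < n → c m n = 0)
    (hbound : ∀ m n : ℕ, n ≤ m →
      ‖c m n‖ ≤ K ^ m / ((1 - κ) ^ n * (m - n).factorial * n.factorial))
    (lam : ℂ) :
    (∀ t : ℝ, 0 < t → Summable (fun p : ℕ × ℕ =>
      (((t ^ p.1 : ℝ) : ℂ) * lam ^ p.2 * ((t ^ (-(κ * (p.2 : ℝ))) : ℝ) : ℂ)) • c p.1 p.2)) ∧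
    (∀ t : ℝ, 0 < t →
      ‖(∑' p : ℕ × ℕ,
          (((t ^ p.1 : ℝ) : ℂ) * lam ^ p.2 * ((t ^ (-(κ * (p.2 : ℝ))) : ℝ) : ℂ)) • c p.1 p.2)
        - c 0 0‖ ≤ Real.exp (K * (t + ‖lam‖ * t ^ (1 - κ) / (1 - κ))) - 1) ∧
    Filter.Tendsto
      (fun t : ℝ => ∑' p : ℕ × ℕ,
        (((t ^ p.1 : ℝ) : ℂ) * lam ^ p.2 * ((t ^ (-(κ * (p.2 : ℝ))) : ℝ) : ℂ)) • c p.1 p.2)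
      (nhdsWithin 0 (Set.Ioi 0)) (nhds (c 0 0)) := by
  have hdist (t : ℝ) (ht : 0 < t) := norm_tsum_frobeniusTerm_sub_le hκ1.ne hvanish hbound lam ht
  refine ⟨fun t ht => summable_frobeniusTerm hκ1.ne hvanish hbound lam ht, hdist, ?_⟩
  rw [tendsto_iff_norm_sub_tendsto_zero]
  exact squeeze_zero' (.of_forall fun _ => norm_nonneg _) (eventually_nhdsWithin_of_forall hdist)
    (tendsto_exp_mul_add_rpow_sub_one hκ1 K ‖lam‖)

/-- The convergence and limit estimate in the proof of Proposition 5.6 (thm:frobeniusz) of the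
paper: if `c : ℕ → ℕ → E` (E a complex Banach space) vanishes for `n > m` and satisfies
`‖c(m,n)‖ ≤ K^m / ((1−κ)^n (m−n)! n!)` for `n ≤ m`, then for every `λ ∈ ℂ` and every `t > 0`
the family `(t^m · λ^n · t^{−κn}) • c(m,n)` is summable; its sum `F(t)` satisfies
`‖F(t) − c(0,0)‖ ≤ exp(K (t + |λ| t^{1−κ}/(1−κ))) − 1`, and `F(t) → c(0,0)` as `t → 0⁺`. -/
theorem frobenius_series_convergence (κ K : ℝ) (hκ0 : 0 < κ) (hκ1 : κ < 1) (hK : 0 ≤ K)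
    {E : Type*} [NormedAddCommGroup E] [NormedSpace ℂ E] [CompleteSpace E]
    (c : ℕ → ℕ → E)
    (hvanish : ∀ m n : ℕ, m < n → c m n = 0)
    (hbound : ∀ m n : ℕ, n ≤ m →
      ‖c m n‖ ≤ K ^ m / ((1 - κ) ^ n * (m - n).factorial * n.factorial))
    (lam : ℂ) :
    (∀ t : ℝ, 0 < t → Summable (fun p : ℕ × ℕ =>
      (((t ^ p.1 : ℝ) : ℂ) * lam ^ p.2 * ((t ^ (-(κ * (p.2 : ℝ))) : ℝ) : ℂ)) • c p.1 p.2)) ∧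
    (∀ t : ℝ, 0 < t →
      ‖(∑' p : ℕ × ℕ,
          (((t ^ p.1 : ℝ) : ℂ) * lam ^ p.2 * ((t ^ (-(κ * (p.2 : ℝ))) : ℝ) : ℂ)) • c p.1 p.2)
        - c 0 0‖ ≤ Real.exp (K * (t + ‖lam‖ * t ^ (1 - κ) / (1 - κ))) - 1) ∧
    Filter.Tendsto
      (fun t : ℝ => ∑' p : ℕ × ℕ,
        (((t ^ p.1 : ℝ) : ℂ) * lam ^ p.2 * ((t ^ (-(κ * (p.2 : ℝ))) : ℝ) : ℂ)) • c p.1 p.2)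
      (nhdsWithin 0 (Set.Ioi 0)) (nhds (c 0 0)) :=
  frobenius_series_convergence_general κ K hκ1 c hvanish hbound lam
end

section
/- Set R := −t + η₀ + η₁ + η₂. Then: (1) the characteristic polynomial of ad(R) equals the characteristic polynomial of −ad(t) = ad(−t); (2) ad(R) is a semisimple endomorphism of L if and only if η₀ = 0. (Lemma 7.3 (lemma:semisimpleR), parts (1) and (2), of the paper: for R = −θ∨ + η with η ∈ n₊ decomposed as η₀+η₁+η₂ in the highest-root gradation, σ(R) = σ(θ∨) and R is semisimple iff η₀ = 0.) -/
/-!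
Write `L_{>i}` for the sum of the `L_j` with `j > i`. Since `ad η₁` and `ad η₂` raise the degree,
`ad R` acts on `L_i` as `-i + ad η₀` modulo `L_{>i}`. In a basis adapted to the grading `ad R` is
thus block triangular with diagonal blocks `-i + (nilpotent)`, which gives its characteristic
polynomial. If `η₀ = 0`, each factor of `∏ i, (ad R + i)` maps `L_i` into `L_{>i}`, so this
squarefree polynomial kills `ad R`. Conversely, every polynomial killing `ad R` also kills its
graded part `ad (-t + η₀)`, which is therefore semisimple; it commutes with the semisimple `ad t`,
so `ad η₀ = ad (-t + η₀) + ad t` is semisimple and nilpotent, hence zero, and `η₀` is central.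
-/

/-- The eigenspace `{x ∈ L : ⁅t, x⁆ = c • x}` of `ad t`, as a submodule of the Lie algebra. -/
def adEigenspace (L : Type*) [LieRing L] [LieAlgebra ℂ L] (t : L) (c : ℂ) :
    Submodule ℂ L where
  carrier := {x : L | ⁅t, x⁆ = c • x}
  add_mem' := by
    intro a b ha hb
    simp only [Set.mem_setOf_eq] at *
    rw [lie_add, ha, hb, smul_add]
  zero_mem' := by simp
  smul_mem' := by
    intro r x hx
    simp only [Set.mem_setOf_eq] at *
    rw [lie_smul, hx, smul_comm]

open Polynomial Module

namespace Matrix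

variable {n α K : Type*} [Fintype n] [DecidableEq α]

lemma toSquareBlock_mul_of_eq_zero_of_ne [CommRing K] {b : n → α} {M : Matrix n n K}
    (hM : ∀ r s, b r ≠ b s → M r s = 0) (P : Matrix n n K) (a : α) :
    (M * P).toSquareBlock b a = M.toSquareBlock b a * P.toSquareBlock b a := by
  have hoff : M.toBlock (b · = a) (fun r => ¬b r = a) = 0 := by
    ext r s
    exact hM _ _ (by rw [r.2]; exact fun h => s.2 h.symm)
  rw [toSquareBlock, toSquareBlockProp, toBlock_mul_eq_add _ (b · = a), hoff, Matrix.zero_mul,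
    add_zero]
  rfl

lemma isNilpotent_toSquareBlock [DecidableEq n] [CommRing K] {b : n → α} {M : Matrix n n K}
    (hM : ∀ r s, b r ≠ b s → M r s = 0) (hnil : IsNilpotent M) (a : α) :
    IsNilpotent (M.toSquareBlock b a) := by
  obtain ⟨k, hk⟩ := hnil
  have hpow : ∀ m : ℕ, (M ^ m).toSquareBlock b a = M.toSquareBlock b a ^ m := by
    intro m
    induction m with
    | zero => ext r s; simp [toSquareBlock_def, one_apply, Subtype.ext_iff]
    | succ m ih => rw [pow_succ', toSquareBlock_mul_of_eq_zero_of_ne hM, ih, pow_succ']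
  exact ⟨k, by rw [← hpow, hk]; rfl⟩

lemma charpoly_scalar_add_of_isNilpotent [DecidableEq n] [Field K] (c : K) {N : Matrix n n K}
    (hN : IsNilpotent N) : (scalar n c + N).charpoly = (X - C c) ^ Fintype.card n := by
  have hNpoly : N.charpoly = X ^ Fintype.card n :=
    sub_eq_zero.mp (isNilpotent_charpoly_sub_pow_of_isNilpotent hN).eq_zero
  have hshift := charpoly_sub_scalar (scalar n c + N) c
  rw [add_sub_cancel_left, hNpoly] at hshift
  have hcomp := congrArg (·.comp (X - C c)) hshift
  simp only [comp_assoc] at hcomp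
  simpa [X_pow_comp] using hcomp.symm

end Matrix

namespace DirectSum.IsInternal

variable {ι K V : Type*} [Field K] [AddCommGroup V] [Module K V] [LinearOrder ι]
  {W : ι → Submodule K V}

lemma collectedBasis_repr_eq_zero_of_mem_iSup_gt (h : IsInternal W) {κ : ι → Type*}
    (v : ∀ i, Basis (κ i) K (W i)) {i : ι} {x : V} (hx : x ∈ ⨆ j > i, W j) {r : Σ j, κ j}
    (hr : r.1 ≤ i) : (h.collectedBasis v).repr x r = 0 := by
  have hle : (⨆ j > i, W j) ≤ LinearMap.ker ((h.collectedBasis v).coord r) :=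
    iSup₂_le fun j hj y hy => h.collectedBasis_repr_of_mem_ne v (hr.trans_lt hj).ne' hy
  exact hle hx

lemma disjoint_iSup_gt (h : IsInternal W) (i : ι) : Disjoint (W i) (⨆ j > i, W j) :=
  (h.submodule_iSupIndep i).mono_right <|
    iSup₂_le fun j hj => le_iSup₂ (f := fun j _ => W j) j hj.ne'

lemma eq_zero_of_forall_le_ker (h : IsInternal W) {f : Module.End K V}
    (hf : ∀ i, W i ≤ LinearMap.ker f) : f = 0 :=
  LinearMap.ker_eq_top.mp (top_unique (h.submodule_iSup_eq_top ▸ iSup_le hf))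

variable {A D : Module.End K V}

lemma iSup_gt_le_comap (hD : ∀ i, W i ≤ (W i).comap D)
    (hAD : ∀ i, ∀ x ∈ W i, A x - D x ∈ ⨆ j > i, W j) (i : ι) :
    (⨆ j > i, W j) ≤ (⨆ j > i, W j).comap A := by
  refine iSup₂_le fun j hj x hx => ?_
  have hDx : D x ∈ ⨆ k > i, W k := le_iSup₂ (f := fun k _ => W k) j hj (hD j hx)
  have hmono : (⨆ k > j, W k) ≤ ⨆ k > i, W k :=
    iSup₂_le fun k hk => le_iSup₂ (f := fun k _ => W k) k (hj.trans hk)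
  simpa using add_mem (hmono (hAD j x hx)) hDx

lemma aeval_sub_aeval_mem_iSup_gt (hD : ∀ i, W i ≤ (W i).comap D)
    (hAD : ∀ i, ∀ x ∈ W i, A x - D x ∈ ⨆ j > i, W j) (p : K[X]) {i : ι} {x : V}
    (hx : x ∈ W i) : aeval A p x - aeval D p x ∈ ⨆ j > i, W j := by
  have hpow : ∀ n : ℕ, (A ^ n) x - (D ^ n) x ∈ ⨆ j > i, W j := by
    intro n
    induction n with
    | zero => simp
    | succ n ih =>
      have hDn : (D ^ n) x ∈ W i := by
        simpa using aeval_apply_smul_mem_of_le_comap hx (X ^ n) D (hD i)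
      have hsplit : (A ^ (n + 1)) x - (D ^ (n + 1)) x
          = A ((A ^ n) x - (D ^ n) x) + (A ((D ^ n) x) - D ((D ^ n) x)) := by
        rw [pow_succ', pow_succ', Module.End.mul_apply, Module.End.mul_apply, map_sub]
        abel
      rw [hsplit]
      exact add_mem (iSup_gt_le_comap hD hAD i ih) (hAD i _ hDn)
  induction p using Polynomial.induction_on' with
  | add p q hp hq => simpa [add_sub_add_comm] using add_mem hp hq
  | monomial n c => simpa [← smul_sub] using Submodule.smul_mem _ c (hpow n)

lemma aeval_eq_zero_of_sub_mem_iSup_gt (h : IsInternal W) (hD : ∀ i, W i ≤ (W i).comap D)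
    (hAD : ∀ i, ∀ x ∈ W i, A x - D x ∈ ⨆ j > i, W j) {p : K[X]} (hp : aeval A p = 0) :
    aeval D p = 0 := by
  refine h.eq_zero_of_forall_le_ker fun i x hx => ?_
  have hmem : aeval D p x ∈ W i := aeval_apply_smul_mem_of_le_comap hx p D (hD i)
  have hgt : aeval D p x ∈ ⨆ j > i, W j := by
    simpa [hp] using neg_mem (aeval_sub_aeval_mem_iSup_gt hD hAD p hx)
  exact Submodule.disjoint_def.mp (h.disjoint_iSup_gt i) _ hmem hgt

lemma isSemisimple_of_sub_smul_mem_iSup_gt [Fintype ι] (h : IsInternal W) {μ : ι → K}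
    (hμ : Function.Injective μ) (hA : ∀ i, ∀ x ∈ W i, A x - μ i • x ∈ ⨆ j > i, W j) :
    A.IsSemisimple := by
  classical
  have hker_mono : ∀ {p q : K[X]}, p ∣ q →
      LinearMap.ker (aeval A p) ≤ LinearMap.ker (aeval A q) := by
    rintro p _ ⟨r, rfl⟩
    exact le_sup_left.trans sup_ker_aeval_le_ker_aeval_mul
  have hker : ∀ i, W i ≤ LinearMap.ker (aeval A (∏ j with i ≤ j, (X - C (μ j)))) := by
    intro i
    induction i using WellFoundedGT.induction with
    | _ i ih =>
      have hgt : (⨆ j > i, W j) ≤ LinearMap.ker (aeval A (∏ j with i < j, (X - C (μ j)))) :=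
        iSup₂_le fun j hj => (ih j hj).trans <| hker_mono <| Finset.prod_dvd_prod_of_subset _ _ _
          fun k hk => by simp only [Finset.mem_filter] at hk ⊢; exact ⟨hk.1, hj.trans_le hk.2⟩
      have hsplit : ∏ j with i ≤ j, (X - C (μ j))
          = (∏ j with i < j, (X - C (μ j))) * (X - C (μ i)) := by
        have hins : Finset.univ.filter (i ≤ ·) = insert i (Finset.univ.filter (i < ·)) := by
          ext j; simp [le_iff_eq_or_lt, eq_comm]
        rw [hins, Finset.prod_insert (by simp), mul_comm]
      intro x hx
      rw [LinearMap.mem_ker, hsplit, map_mul, Module.End.mul_apply]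
      exact hgt (by simpa using hA i x hx)
  refine Module.End.isSemisimple_of_squarefree_aeval_eq_zero (p := ∏ j, (X - C (μ j))) ?_ ?_
  · exact (separable_prod_X_sub_C_iff'.mpr fun i _ j _ hij => hμ hij).squarefree
  · exact h.eq_zero_of_forall_le_ker fun i => (hker i).trans <|
      hker_mono <| Finset.prod_dvd_prod_of_subset _ _ _ (Finset.subset_univ _)

theorem charpoly_eq_of_sub_mem_iSup_gt [Fintype ι] [FiniteDimensional K V] (h : IsInternal W)
    (hD : ∀ i, W i ≤ (W i).comap D) (hAD : ∀ i, ∀ x ∈ W i, A x - D x ∈ ⨆ j > i, W j)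
    {T : Module.End K V} (μ : ι → K) (hT : ∀ i, ∀ x ∈ W i, T x = μ i • x)
    (hDT : IsNilpotent (D - T)) : A.charpoly = T.charpoly := by
  classical
  let B := h.collectedBasis fun i => Free.chooseBasis K (W i)
  -- `A - D` raises the degree, so the matrix of `A` is block triangular for the reversed order.
  let b : (Σ i, Free.ChooseBasisIndex K (W i)) → ιᵒᵈ := fun r => OrderDual.toDual r.1
  have hTmat : ∀ r s, LinearMap.toMatrix B B T r s = if r = s then μ s.1 else 0 := by
    intro r s
    rw [LinearMap.toMatrix_apply, hT _ _ (h.collectedBasis_mem _ s), map_smul, Basis.repr_self]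
    simp [Finsupp.single_apply, eq_comm]
  have hNmat : ∀ r s, r.1 ≠ s.1 → LinearMap.toMatrix B B (D - T) r s = 0 := by
    rintro ⟨i, r⟩ s hrs
    have hBs := h.collectedBasis_mem (fun i => Free.chooseBasis K (W i)) s
    have hmem : (D - T) (B s) ∈ W s.1 := by
      rw [LinearMap.sub_apply, hT _ _ hBs]
      exact sub_mem (hD _ hBs) (Submodule.smul_mem _ _ hBs)
    rw [LinearMap.toMatrix_apply]
    exact h.collectedBasis_repr_of_mem_ne _ (Ne.symm hrs) hmem
  have hHmat : ∀ r s, r.1 ≤ s.1 → LinearMap.toMatrix B B (A - D) r s = 0 := by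
    intro r s hrs
    rw [LinearMap.toMatrix_apply]
    exact h.collectedBasis_repr_eq_zero_of_mem_iSup_gt _ (hAD _ _ (h.collectedBasis_mem _ s)) hrs
  have hAmat : ∀ r s, LinearMap.toMatrix B B A r s = LinearMap.toMatrix B B T r s
      + LinearMap.toMatrix B B (D - T) r s + LinearMap.toMatrix B B (A - D) r s := by
    intro r s
    simp only [map_sub, Matrix.sub_apply]
    abel
  have htriT : (LinearMap.toMatrix B B T).BlockTriangular b := fun r s hrs => by
    rw [hTmat, if_neg]; rintro rfl; exact hrs.false
  have htriA : (LinearMap.toMatrix B B A).BlockTriangular b := fun r s hrs => by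
    rw [hAmat, htriT hrs, hNmat r s (ne_of_lt hrs), hHmat r s (le_of_lt hrs), add_zero, add_zero]
  rw [← LinearMap.charpoly_toMatrix A B, ← LinearMap.charpoly_toMatrix T B, htriA.charpoly,
    htriT.charpoly]
  refine Finset.prod_congr rfl fun a _ => ?_
  have hblockT : (LinearMap.toMatrix B B T).toSquareBlock b a = Matrix.scalar _ (μ a.ofDual) := by
    ext r s
    rw [Matrix.toSquareBlock_def, Matrix.of_apply, hTmat, Matrix.scalar_apply,
      Matrix.diagonal_apply, show s.1.1 = a.ofDual from s.2]
    exact if_congr Subtype.ext_iff.symm rfl rfl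
  have hblockA : (LinearMap.toMatrix B B A).toSquareBlock b a
      = Matrix.scalar _ (μ a.ofDual) + (LinearMap.toMatrix B B (D - T)).toSquareBlock b a := by
    rw [← hblockT]
    ext r s
    simp only [Matrix.toSquareBlock_def, Matrix.of_apply, Matrix.add_apply]
    rw [hAmat, hHmat _ _ (by rw [show r.1.1 = s.1.1 from r.2.trans s.2.symm]), add_zero]
  have hNblock := Matrix.isNilpotent_toSquareBlock (b := b) (fun r s hrs => hNmat r s
    fun h => hrs (congrArg OrderDual.toDual h)) (hDT.map (LinearMap.toMatrixAlgEquiv B)) a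
  rw [hblockA, hblockT, Matrix.charpoly_scalar_add_of_isNilpotent _ hNblock,
    ← add_zero (Matrix.scalar _ _), Matrix.charpoly_scalar_add_of_isNilpotent _ IsNilpotent.zero]

end DirectSum.IsInternal

namespace LieAlgebra

variable {L : Type*} [LieRing L] [LieAlgebra ℂ L] {t : L}

lemma mem_adEigenspace_iff {c : ℂ} {x : L} : x ∈ adEigenspace L t c ↔ ⁅t, x⁆ = c • x := Iff.rfl

lemma adEigenspace_eq_eigenspace (t : L) (c : ℂ) :
    adEigenspace L t c = (ad ℂ L t).eigenspace c := by
  ext x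
  rw [Module.End.mem_eigenspace_iff, ad_apply, mem_adEigenspace_iff]

lemma lie_mem_adEigenspace {c d : ℂ} {x y : L} (hx : x ∈ adEigenspace L t c)
    (hy : y ∈ adEigenspace L t d) : ⁅x, y⁆ ∈ adEigenspace L t (c + d) := by
  rw [mem_adEigenspace_iff] at hx hy ⊢
  rw [leibniz_lie t x y, hx, hy, smul_lie, lie_smul, add_smul]

lemma ad_neg_apply {x : L} {c : ℂ} (hx : x ∈ adEigenspace L t c) :
    ad ℂ L (-t) x = -c • x := by
  rw [ad_apply, neg_lie, mem_adEigenspace_iff.mp hx, neg_smul]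

lemma ad_neg_add_mem_adEigenspace {η x : L} {c : ℂ} (hη : η ∈ adEigenspace L t 0)
    (hx : x ∈ adEigenspace L t c) : ad ℂ L (-t + η) x ∈ adEigenspace L t c := by
  rw [map_add, LinearMap.add_apply, ad_neg_apply hx]
  exact add_mem (Submodule.smul_mem _ _ hx) (by simpa using lie_mem_adEigenspace hη hx)

variable {S : Set ℤ}

lemma adEigenspace_eq_bot_of_notMem
    (hdec : DirectSum.IsInternal fun i : S => adEigenspace L t ((i : ℤ) : ℂ)) {n : ℤ}
    (hn : n ∉ S) : adEigenspace L t n = ⊥ := by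
  have hle : ⊤ ≤ ⨆ (ν : ℂ) (_ : ν ≠ n), (ad ℂ L t).eigenspace ν := by
    rw [← hdec.submodule_iSup_eq_top]
    refine iSup_le fun i => ?_
    rw [adEigenspace_eq_eigenspace]
    exact le_iSup₂_of_le ((i : ℤ) : ℂ) (fun h => hn (Int.cast_injective h ▸ i.2)) le_rfl
  rw [adEigenspace_eq_eigenspace]
  exact disjoint_top.mp (((ad ℂ L t).eigenspaces_iSupIndep (n : ℂ)).mono_right hle)

lemma lie_mem_iSup_gt
    (hdec : DirectSum.IsInternal fun i : S => adEigenspace L t ((i : ℤ) : ℂ)) {k : ℤ}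
    (hk : 0 < k) {y x : L} (hy : y ∈ adEigenspace L t k) (i : S)
    (hx : x ∈ adEigenspace L t ((i : ℤ) : ℂ)) :
    ⁅y, x⁆ ∈ ⨆ j > i, adEigenspace L t ((j : ℤ) : ℂ) := by
  have hyx : ⁅y, x⁆ ∈ adEigenspace L t ((k + i : ℤ) : ℂ) := by
    simpa using lie_mem_adEigenspace hy hx
  by_cases hS : k + i ∈ S
  · exact le_iSup₂ (f := fun (j : S) _ => adEigenspace L t ((j : ℤ) : ℂ))
      ⟨k + i, hS⟩ (show (i : ℤ) < k + i by omega) hyx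
  · rw [adEigenspace_eq_bot_of_notMem hdec hS, Submodule.mem_bot] at hyx
    rw [hyx]
    exact zero_mem _

lemma ad_add_add_sub_ad_mem_iSup_gt
    (hdec : DirectSum.IsInternal fun i : S => adEigenspace L t ((i : ℤ) : ℂ)) (s : L) {η₁ η₂ : L}
    (hη₁ : η₁ ∈ adEigenspace L t 1) (hη₂ : η₂ ∈ adEigenspace L t 2) (i : S) {x : L}
    (hx : x ∈ adEigenspace L t ((i : ℤ) : ℂ)) :
    ad ℂ L (s + η₁ + η₂) x - ad ℂ L s x ∈ ⨆ j > i, adEigenspace L t ((j : ℤ) : ℂ) := by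
  have hsub : ad ℂ L (s + η₁ + η₂) x - ad ℂ L s x = ⁅η₁, x⁆ + ⁅η₂, x⁆ := by
    simp only [ad_apply, add_lie]
    abel
  rw [hsub]
  exact add_mem (lie_mem_iSup_gt hdec one_pos (by simpa using hη₁) i hx)
    (lie_mem_iSup_gt hdec two_pos (by simpa using hη₂) i hx)

lemma isSemisimple_ad_of_isInternal [Fintype S]
    (hdec : DirectSum.IsInternal fun i : S => adEigenspace L t ((i : ℤ) : ℂ)) :
    (ad ℂ L t).IsSemisimple :=
  hdec.isSemisimple_of_sub_smul_mem_iSup_gt (μ := fun i => ((i : ℤ) : ℂ))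
    (fun _ _ h => Subtype.ext (Int.cast_injective h)) fun i x hx => by
      rw [ad_apply, mem_adEigenspace_iff.mp hx, sub_self]
      exact zero_mem _

lemma eq_zero_of_isSemisimple_ad [Module.Finite ℂ L] [Fintype S] (hcenter : center ℂ L = ⊥)
    (hdec : DirectSum.IsInternal fun i : S => adEigenspace L t ((i : ℤ) : ℂ)) {η₀ η₁ η₂ : L}
    (hη₀ : η₀ ∈ adEigenspace L t 0) (hη₀nil : IsNilpotent (ad ℂ L η₀))
    (hη₁ : η₁ ∈ adEigenspace L t 1) (hη₂ : η₂ ∈ adEigenspace L t 2)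
    (hss : (ad ℂ L (-t + η₀ + η₁ + η₂)).IsSemisimple) : η₀ = 0 := by
  have hDss : (ad ℂ L (-t + η₀)).IsSemisimple :=
    Module.End.isSemisimple_of_squarefree_aeval_eq_zero hss.minpoly_squarefree <|
      hdec.aeval_eq_zero_of_sub_mem_iSup_gt (fun _ _ hx => ad_neg_add_mem_adEigenspace hη₀ hx)
        (ad_add_add_sub_ad_mem_iSup_gt hdec _ hη₁ hη₂) (minpoly.aeval ℂ _)
  have hcomm : Commute (ad ℂ L (-t + η₀)) (ad ℂ L t) := by
    have h0 : ⁅-t + η₀, t⁆ = 0 := by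
      rw [add_lie, neg_lie, lie_self, neg_zero, zero_add, ← lie_skew, mem_adEigenspace_iff.mp hη₀,
        zero_smul, neg_zero]
    refine LinearMap.ext fun x => ?_
    simp only [Module.End.mul_apply, ad_apply, leibniz_lie (-t + η₀) t x, h0, zero_lie, zero_add]
  have hη₀ss : (ad ℂ L η₀).IsSemisimple := by
    rw [show η₀ = (-t + η₀) + t by abel, map_add]
    exact hDss.add_of_commute hcomm (isSemisimple_ad_of_isInternal hdec)
  have hcenter_mem : η₀ ∈ center ℂ L := by
    have had := Module.End.eq_zero_of_isNilpotent_isSemisimple hη₀nil hη₀ss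
    rw [← self_module_ker_eq_center, LieModule.mem_ker]
    exact fun x => LinearMap.congr_fun had x
  simpa [hcenter] using hcenter_mem

lemma charpoly_ad_eq_charpoly_ad_neg [Module.Finite ℂ L] [Fintype S]
    (hdec : DirectSum.IsInternal fun i : S => adEigenspace L t ((i : ℤ) : ℂ)) {η₀ η₁ η₂ : L}
    (hη₀ : η₀ ∈ adEigenspace L t 0) (hη₀nil : IsNilpotent (ad ℂ L η₀))
    (hη₁ : η₁ ∈ adEigenspace L t 1) (hη₂ : η₂ ∈ adEigenspace L t 2) :
    (ad ℂ L (-t + η₀ + η₁ + η₂)).charpoly = (ad ℂ L (-t)).charpoly :=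
  hdec.charpoly_eq_of_sub_mem_iSup_gt (fun _ _ hx => ad_neg_add_mem_adEigenspace hη₀ hx)
    (ad_add_add_sub_ad_mem_iSup_gt hdec _ hη₁ hη₂) (fun i => -((i : ℤ) : ℂ))
    (fun _ _ hx => ad_neg_apply hx) (by rwa [map_add, add_sub_cancel_left])

lemma isSemisimple_ad_neg_add_add [Fintype S]
    (hdec : DirectSum.IsInternal fun i : S => adEigenspace L t ((i : ℤ) : ℂ)) {η₁ η₂ : L}
    (hη₁ : η₁ ∈ adEigenspace L t 1) (hη₂ : η₂ ∈ adEigenspace L t 2) :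
    (ad ℂ L (-t + η₁ + η₂)).IsSemisimple :=
  hdec.isSemisimple_of_sub_smul_mem_iSup_gt (μ := fun i => -((i : ℤ) : ℂ))
    (fun _ _ h => Subtype.ext (Int.cast_injective (neg_injective h))) fun i x hx => by
      simpa only [ad_neg_apply hx] using ad_add_add_sub_ad_mem_iSup_gt hdec (-t) hη₁ hη₂ i hx

end LieAlgebra

/-- Lemma 7.3 (lemma:semisimpleR), parts (1) and (2), of the paper: let `L` be a
finite-dimensional complex Lie algebra with trivial center, `t ∈ L` such that `L` is the
internal direct sum of the eigenspaces `L_i = {x : ⁅t,x⁆ = i•x}`, `i ∈ {−2,…,2}`, of `ad t`.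
Let `η₀ ∈ L₀` with `ad η₀` nilpotent, `η₁ ∈ L₁`, `η₂ ∈ L₂`, and set
`R = −t + η₀ + η₁ + η₂`.  Then the characteristic polynomial of `ad R` equals that of
`ad (−t)`, and `ad R` is semisimple if and only if `η₀ = 0`. -/
theorem charpoly_ad_and_semisimple_iff
    (L : Type*) [LieRing L] [LieAlgebra ℂ L] [Module.Finite ℂ L]
    (hcenter : LieAlgebra.center ℂ L = ⊥)
    (t : L)
    (hdec : DirectSum.IsInternal
      (fun i : Set.Icc (-2 : ℤ) 2 => adEigenspace L t ((i : ℤ) : ℂ)))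
    (η₀ η₁ η₂ : L)
    (hη₀ : η₀ ∈ adEigenspace L t 0) (hη₀nil : IsNilpotent (LieAlgebra.ad ℂ L η₀))
    (hη₁ : η₁ ∈ adEigenspace L t 1) (hη₂ : η₂ ∈ adEigenspace L t 2) :
    (LieAlgebra.ad ℂ L (-t + η₀ + η₁ + η₂)).charpoly =
      (LieAlgebra.ad ℂ L (-t)).charpoly ∧
    ((LieAlgebra.ad ℂ L (-t + η₀ + η₁ + η₂)).IsSemisimple ↔ η₀ = 0) := by
  refine ⟨LieAlgebra.charpoly_ad_eq_charpoly_ad_neg hdec hη₀ hη₀nil hη₁ hη₂,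
    LieAlgebra.eq_zero_of_isSemisimple_ad hcenter hdec hη₀ hη₀nil hη₁ hη₂, ?_⟩
  rintro rfl
  simpa using LieAlgebra.isSemisimple_ad_neg_add_add hdec hη₁ hη₂
end

section
/- The map F is injective if and only if it is surjective, and F is bijective if and only if every A_i is bijective. (The abstract triangularity principle behind Proposition 6.9(1) of the paper: the map Φ^{X⁰}, which has triangular form Φ_i(X⁰,…,X^i) = A_i^{X⁰}[X^i] + P_i(X⁰,…,X^{i−1}), is injective if and only if it is surjective.) -/
/-!
Solve `F x = t` one coordinate at a time: once `x_j` is known for `j < i`, the `i`-th equation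
reads `A_i x_i = t_i - P_i x`. Hence `F` is injective (surjective) as soon as every `A_i` is, by
well-founded induction along the index order. Conversely, if `F` is surjective and the `A_j` with
`j < i` are injective, then a preimage of a vector agreeing with `F x₀` below `i` agrees with `x₀`
below `i`, and its `i`-th coordinate is a preimage under `A_i`; dually, if `F` is injective and the
`A_j` with `j > i` are surjective, two vectors with equal `A_i`-images at `i` can be completed
above `i` so that their `F`-images coincide. Since each `A_i` is injective iff surjective by
equality of dimensions, an upward (downward) induction shows that all `A_i` are bijective as soon
as `F` is surjective (injective).
-/

open Function Set

section

variable {ι : Type*} [LinearOrder ι] {U V : ι → Type*}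

theorem exists_forall_eq_of_dependsOn_Iio [WellFoundedLT ι] [∀ i, Nonempty (U i)]
    (c : ∀ i, (∀ j, U j) → U i) (hc : ∀ i, DependsOn (c i) (Iio i)) :
    ∃ x : ∀ i, U i, ∀ i, x i = c i x := by
  let x : ∀ i, U i := WellFoundedLT.fix fun i x_lt =>
    c i fun j => if h : j < i then x_lt j h else Classical.arbitrary _
  refine ⟨x, fun i => ?_⟩
  rw [show x i = _ from WellFoundedLT.fix_eq _ i]
  exact hc i fun j hj => dif_pos hj

variable [∀ i, AddGroup (V i)]

def triangularMap (A : ∀ i, U i → V i) (P : ∀ i, (∀ j, U j) → V i) (x : ∀ i, U i) :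
    ∀ i, V i :=
  fun i => A i (x i) + P i x

namespace triangularMap

variable {A : ∀ i, U i → V i} {P : ∀ i, (∀ j, U j) → V i}

theorem eq_of_forall_mem_lowerSet [WellFoundedLT ι] (hP : ∀ i, DependsOn (P i) (Iio i))
    {s : Set ι} (hs : IsLowerSet s) (hA : ∀ i ∈ s, Injective (A i)) {x y : ∀ i, U i}
    (hxy : ∀ i ∈ s, triangularMap A P x i = triangularMap A P y i) :
    ∀ i ∈ s, x i = y i := by
  intro i
  induction i using WellFoundedLT.induction with
  | ind i ih =>
    intro hi
    have hPi : P i x = P i y := hP i fun j hj => ih j hj (hs (le_of_lt hj) hi)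
    have hAi := hxy i hi
    rw [triangularMap, triangularMap, hPi] at hAi
    exact hA i hi (add_right_cancel hAi)

theorem injective [WellFoundedLT ι] (hP : ∀ i, DependsOn (P i) (Iio i))
    (hA : ∀ i, Injective (A i)) : Injective (triangularMap A P) := fun _ _ hxy =>
  funext fun i => eq_of_forall_mem_lowerSet hP isLowerSet_univ (fun i _ => hA i)
    (fun i _ => congrFun hxy i) i trivial

theorem surjective [WellFoundedLT ι] (hP : ∀ i, DependsOn (P i) (Iio i))
    (hA : ∀ i, Surjective (A i)) : Surjective (triangularMap A P) := by
  intro t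
  have : ∀ i, Nonempty (U i) := fun i => ⟨surjInv (hA i) 0⟩
  obtain ⟨x, hx⟩ := exists_forall_eq_of_dependsOn_Iio (fun i x => surjInv (hA i) (t i - P i x))
    fun i _ _ hxy => by simp only [hP i hxy]
  refine ⟨x, funext fun i => ?_⟩
  rw [triangularMap, hx i, surjInv_eq (hA i), sub_add_cancel]

theorem surjective_of_surjective [WellFoundedLT ι] (hP : ∀ i, DependsOn (P i) (Iio i))
    (hT : Surjective (triangularMap A P)) {i : ι} (hA : ∀ j < i, Injective (A j)) :
    Surjective (A i) := by
  intro v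
  obtain ⟨x₀⟩ : Nonempty (∀ j, U j) := ⟨(hT 0).choose⟩
  obtain ⟨x, hx⟩ := hT (update (triangularMap A P x₀) i (v + P i x₀))
  have hbelow : ∀ j ∈ Iio i, x j = x₀ j :=
    eq_of_forall_mem_lowerSet hP (isLowerSet_Iio i) hA fun j hj => by
      rw [hx, update_of_ne (ne_of_lt hj)]
  have hxi := congrFun hx i
  rw [update_self, triangularMap, hP i hbelow] at hxi
  exact ⟨x i, add_right_cancel hxi⟩

theorem injective_of_injective [WellFoundedLT ι] [∀ i, Nonempty (U i)]
    (hP : ∀ i, DependsOn (P i) (Iio i)) (hT : Injective (triangularMap A P)) {i : ι}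
    (hA : ∀ j, i < j → Surjective (A j)) : Injective (A i) := by
  intro a b hab
  obtain ⟨x₀⟩ : Nonempty (∀ j, U j) := inferInstance
  have hextend : ∀ u : U i, ∃ y : ∀ j, U j,
      y i = u ∧ (∀ j ∈ Iio i, y j = x₀ j) ∧ ∀ j, i < j → triangularMap A P y j = 0 := by
    intro u
    obtain ⟨y, hy⟩ := exists_forall_eq_of_dependsOn_Iio
      (fun j y => if h : i < j then surjInv (hA j h) (-P j y) else update x₀ i u j)
      fun j _ _ hyz => by simp only [hP j hyz]
    refine ⟨y, by simpa using hy i, fun j hj => ?_, fun j hj => ?_⟩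
    · rw [hy j, dif_neg (lt_asymm hj), update_of_ne (ne_of_lt hj)]
    · rw [triangularMap, hy j, dif_pos hj, surjInv_eq (hA j hj), neg_add_cancel]
  obtain ⟨y, hya, hy₀, hyT⟩ := hextend a
  obtain ⟨z, hzb, hz₀, hzT⟩ := hextend b
  have hbelow : ∀ j ∈ Iio i, y j = z j := fun j hj => (hy₀ j hj).trans (hz₀ j hj).symm
  have hTyz : triangularMap A P y = triangularMap A P z := by
    funext j
    rcases lt_trichotomy j i with hj | rfl | hj
    · rw [triangularMap, triangularMap, hbelow j hj,
        hP j fun l hl => hbelow l (lt_trans hl hj)]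
    · rw [triangularMap, triangularMap, hya, hzb, hab, hP j hbelow]
    · rw [hyT j hj, hzT j hj]
  rw [← hya, ← hzb, hT hTyz]

theorem forall_injective_of_injective [WellFoundedLT ι] [WellFoundedGT ι] [∀ i, Nonempty (U i)]
    (hP : ∀ i, DependsOn (P i) (Iio i)) (hA : ∀ i, Injective (A i) → Surjective (A i))
    (hT : Injective (triangularMap A P)) (i : ι) : Injective (A i) := by
  induction i using WellFoundedGT.induction with
  | ind i ih => exact injective_of_injective hP hT fun j hj => hA j (ih j hj)

theorem forall_surjective_of_surjective [WellFoundedLT ι] (hP : ∀ i, DependsOn (P i) (Iio i))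
    (hA : ∀ i, Surjective (A i) → Injective (A i)) (hT : Surjective (triangularMap A P))
    (i : ι) : Surjective (A i) := by
  induction i using WellFoundedLT.induction with
  | ind i ih => exact surjective_of_surjective hP hT fun j hj => hA j (ih j hj)

theorem injective_iff [WellFoundedLT ι] [WellFoundedGT ι] [∀ i, Nonempty (U i)]
    (hP : ∀ i, DependsOn (P i) (Iio i)) (hA : ∀ i, Injective (A i) ↔ Surjective (A i)) :
    Injective (triangularMap A P) ↔ ∀ i, Bijective (A i) := by
  refine ⟨fun hT i => ?_, fun h => injective hP fun i => (h i).1⟩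
  have hinj := forall_injective_of_injective hP (fun i => (hA i).1) hT i
  exact ⟨hinj, (hA i).1 hinj⟩

theorem surjective_iff [WellFoundedLT ι] (hP : ∀ i, DependsOn (P i) (Iio i))
    (hA : ∀ i, Injective (A i) ↔ Surjective (A i)) :
    Surjective (triangularMap A P) ↔ ∀ i, Bijective (A i) := by
  refine ⟨fun hT i => ?_, fun h => surjective hP fun i => (h i).2⟩
  have hsurj := forall_surjective_of_surjective hP (fun i => (hA i).2) hT i
  exact ⟨(hA i).2 hsurj, hsurj⟩

theorem bijective_iff [WellFoundedLT ι] [WellFoundedGT ι] [∀ i, Nonempty (U i)]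
    (hP : ∀ i, DependsOn (P i) (Iio i)) (hA : ∀ i, Injective (A i) ↔ Surjective (A i)) :
    Bijective (triangularMap A P) ↔ ∀ i, Bijective (A i) :=
  ⟨fun hT => (injective_iff hP hA).1 hT.1,
    fun h => ⟨(injective_iff hP hA).2 h, (surjective_iff hP hA).2 h⟩⟩

end triangularMap

end

/-- The abstract triangularity principle behind Proposition 6.9(1) of the paper: let
`F : Π i, U i → Π i, V i` be a map of triangular form `F(x)_i = A_i(x_i) + P_i((x_j)_{j<i})`,
where the `A_i` are linear maps between finite-dimensional spaces of equal dimension and each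
`P_i` depends only on the coordinates of index `< i`.  Then `F` is injective iff it is
surjective, and `F` is bijective iff every `A_i` is bijective. -/
theorem triangular_injective_iff_surjective
    (k : Type*) [Field k] (N : ℕ)
    (U V : Fin N → Type*)
    [∀ i, AddCommGroup (U i)] [∀ i, Module k (U i)]
    [∀ i, AddCommGroup (V i)] [∀ i, Module k (V i)]
    [∀ i, FiniteDimensional k (U i)] [∀ i, FiniteDimensional k (V i)]
    (hdim : ∀ i, Module.finrank k (U i) = Module.finrank k (V i))
    (F : (∀ i, U i) → (∀ i, V i))
    (A : ∀ i, U i →ₗ[k] V i)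
    (P : ∀ i : Fin N, (∀ j, U j) → V i)
    (hP : ∀ i : Fin N, ∀ x y : ∀ j, U j, (∀ j : Fin N, j < i → x j = y j) → P i x = P i y)
    (hF : ∀ (x : ∀ j, U j) (i : Fin N), F x i = A i (x i) + P i x) :
    (Function.Injective F ↔ Function.Surjective F) ∧
    (Function.Bijective F ↔ ∀ i, Function.Bijective (A i)) := by
  obtain rfl : F = triangularMap (fun i => A i) P := funext fun x => funext (hF x)
  have hP' : ∀ i, DependsOn (P i) (Iio i) := fun i x y => hP i x y
  have hA : ∀ i, Injective (A i) ↔ Surjective (A i) := fun i =>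
    LinearMap.injective_iff_surjective_of_finrank_eq_finrank (hdim i)
  rw [triangularMap.injective_iff hP' hA, triangularMap.surjective_iff hP' hA]
  exact ⟨Iff.rfl, triangularMap.bijective_iff hP' hA⟩
end

section
/- There exists a sequence f : ℕ → ℂ satisfying the Frobenius recursion if and only if −a³/4 + a·b − c = 0. (Equation (10.3) (eq:trivialscalar) of the paper: the no-logarithm/trivial-monodromy condition at a regular singular point for the sl₂ quantum KdV Schrödinger operator ψ″ = v·ψ with v(x) = 2x^{−2} + a·x^{−1} + b + c·x + Σ_{m≥2} v_m x^m.) -/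
noncomputable def fr (a b c : ℂ) (v : ℕ → ℂ) (k : ℕ) : ℂ :=
  if h0 : k = 0 then 1
  else if h3 : k = 3 then 0
  else
    (a * fr a b c v (k - 1) + (if 2 ≤ k then b * fr a b c v (k - 2) else 0) +
        (if 3 ≤ k then c * fr a b c v (k - 3) else 0) +
        ∑ m ∈ (Finset.Icc 2 (k - 2)).attach, v m.1 * fr a b c v (k - 2 - m.1)) /
      ((k : ℂ) * ((k : ℂ) - 3))
termination_by k
decreasing_by
  · omega
  · omega
  · omega
  · omega

lemma fr0 (a b c : ℂ) (v : ℕ → ℂ) : fr a b c v 0 = 1 := by rw [fr]; norm_num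

lemma fr1 (a b c : ℂ) (v : ℕ → ℂ) : fr a b c v 1 = -a / 2 := by
  rw [fr, Finset.Icc_eq_empty (by omega : ¬(2:ℕ) ≤ 1 - 2)]
  norm_num [fr0]; ring

lemma fr2 (a b c : ℂ) (v : ℕ → ℂ) : fr a b c v 2 = a ^ 2 / 4 - b / 2 := by
  rw [fr, Finset.Icc_eq_empty (by omega : ¬(2:ℕ) ≤ 2 - 2)]
  norm_num [fr0, fr1]; ring

/-- Equation (10.3) (eq:trivialscalar) of the paper: the Frobenius recursion at the regular
singular point `x = 0` for `ψ″ = v·ψ` with `v(x) = 2x^{−2} + a x^{−1} + b + c x + Σ_{m≥2} v_m x^m`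
and indicial exponent `−1`, namely `f₀ = 1` and, for `k ≥ 1`,
`k(k−3) f_k = a f_{k−1} + b f_{k−2} + c f_{k−3} + Σ_{m=2}^{k−2} v_m f_{k−2−m}`
(negative indices read as `0`), admits a solution `f : ℕ → ℂ` if and only if the
no-logarithm (trivial monodromy) condition `−a³/4 + a·b − c = 0` holds. -/
theorem frobenius_recursion_solvable_iff (a b c : ℂ) (v : ℕ → ℂ) :
    (∃ f : ℕ → ℂ, f 0 = 1 ∧ ∀ k : ℕ, 1 ≤ k →
        (k : ℂ) * ((k : ℂ) - 3) * f k =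
          a * f (k - 1) + (if 2 ≤ k then b * f (k - 2) else 0) +
            (if 3 ≤ k then c * f (k - 3) else 0) +
            ∑ m ∈ Finset.Icc 2 (k - 2), v m * f (k - 2 - m)) ↔
      -a ^ 3 / 4 + a * b - c = 0 := by
  constructor
  · rintro ⟨f, hf0, hf⟩
    have H1 := hf 1 (by norm_num)
    have H2 := hf 2 (by norm_num)
    have H3 := hf 3 (by norm_num)
    norm_num [hf0] at H1 H2 H3
    have e1 : f 1 = -a / 2 := by linear_combination -H1 / 2
    have e2 : f 2 = a ^ 2 / 4 - b / 2 := by linear_combination -H2 / 2 - (a / 2) * e1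
    linear_combination H3 + a * e2 + b * e1
  · intro h
    refine ⟨fr a b c v, fr0 a b c v, fun k hk => ?_⟩
    by_cases h3 : k = 3
    · subst h3
      rw [Finset.Icc_eq_empty (by omega : ¬(2:ℕ) ≤ 3 - 2)]
      simp only [Finset.sum_empty, if_pos (by norm_num : 2 ≤ 3), if_pos (le_refl 3)]
      show (3 : ℂ) * ((3 : ℂ) - 3) * fr a b c v 3 =
        a * fr a b c v 2 + b * fr a b c v 1 + c * fr a b c v 0 + 0
      rw [fr0, fr1, fr2]
      linear_combination h
    · have hk0 : k ≠ 0 := by omega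
      have hkC : (k : ℂ) ≠ 0 := Nat.cast_ne_zero.mpr hk0
      have hk3 : (k : ℂ) - 3 ≠ 0 := by
        intro hh
        apply h3
        have : (k : ℂ) = 3 := by linear_combination hh
        exact_mod_cast this
      conv_lhs => rw [fr]
      rw [dif_neg hk0, dif_neg h3]
      rw [Finset.sum_attach (Finset.Icc 2 (k - 2)) (fun m => v m * fr a b c v (k - 2 - m))]
      field_simp
end
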